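/- arXiv:2507.20379 — 9 statements merged into one kernel-verified Lean document; each statement's English description precedes it below -/
import Mathlib

section
/- Let μ and μ′ be probability measures on a measurable space (X, B(X)), both absolutely continuous with respect to a σ-finite measure ν. Let h: X → [0,∞) be measurable with C := sup_{x∈X} h(x) < ∞, and suppose 0 < Z(μ) := ∫ h dμ < ∞ and 0 < Z(μ′) := ∫ h dμ′ < ∞. Define posteriors Fμ(A) := (∫_A h dμ)/Z(μ) and Fμ′(A) := (∫_A h dμ′)/Z(μ′). Then d_TV(Fμ, Fμ′) ≤ (C / max(Z(μ), Z(μ′))) · d_TV(μ, μ′). -/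
open MeasureTheory

private lemma aux_tv {X : Type*} [MeasurableSpace X] (ν : Measure X)
    (π π' h : X → ℝ) (C Z Z' : ℝ)
    (hπ0 : ∀ x, 0 ≤ π x) (hπ'0 : ∀ x, 0 ≤ π' x) (hh0 : ∀ x, 0 ≤ h x)
    (hπ1 : ∫ x, π x ∂ν = 1) (hπ'1 : ∫ x, π' x ∂ν = 1)
    (hC : ∀ x, h x ≤ C)
    (hZ : Z = ∫ x, h x * π x ∂ν) (hZ' : Z' = ∫ x, h x * π' x ∂ν)
    (hZpos : 0 < Z) (hZ'pos : 0 < Z')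
    (hint : Integrable (fun x => h x * π x) ν)
    (hint' : Integrable (fun x => h x * π' x) ν)
    (hle : Z' ≤ Z) :
    ∫ x, |h x * π x / Z - h x * π' x / Z'| ∂ν ≤
      C / Z * ∫ x, |π x - π' x| ∂ν := by
  -- integrability of the densities
  have hπint : Integrable π ν := by
    by_contra h0
    rw [integral_undef h0] at hπ1; norm_num at hπ1
  have hπ'int : Integrable π' ν := by
    by_contra h0
    rw [integral_undef h0] at hπ'1; norm_num at hπ'1
  have hdint : Integrable (fun x => π x - π' x) ν := hπint.sub hπ'int
  have hgint : Integrable (fun x => h x * π x - h x * π' x) ν := hint.sub hint'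
  -- C is nonnegative
  have hZleC : Z ≤ C := by
    rw [hZ]
    calc ∫ x, h x * π x ∂ν ≤ ∫ x, C * π x ∂ν :=
          integral_mono hint (hπint.const_mul C)
            (fun x => mul_le_mul_of_nonneg_right (hC x) (hπ0 x))
      _ = C := by rw [integral_const_mul, hπ1, mul_one]
  have hC0 : 0 ≤ C := le_trans hZpos.le hZleC
  -- pointwise bound
  have hpt : ∀ x, |h x * π x / Z - h x * π' x / Z'| ≤
      |h x * π x - h x * π' x| / Z + (h x * π' x) * (1 / Z' - 1 / Z) := by
    intro x
    have hid : h x * π x / Z - h x * π' x / Z' =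
        (h x * π x - h x * π' x) / Z - (h x * π' x) * (1 / Z' - 1 / Z) := by
      field_simp
      ring
    rw [hid]
    calc |(h x * π x - h x * π' x) / Z - (h x * π' x) * (1 / Z' - 1 / Z)|
        ≤ |(h x * π x - h x * π' x) / Z| + |(h x * π' x) * (1 / Z' - 1 / Z)| :=
          abs_sub _ _
      _ = |h x * π x - h x * π' x| / Z + (h x * π' x) * (1 / Z' - 1 / Z) := by
          have h1 : 1 / Z ≤ 1 / Z' := one_div_le_one_div_of_le hZ'pos hle
          have h2 : |1 / Z' - 1 / Z| = 1 / Z' - 1 / Z :=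
            abs_of_nonneg (sub_nonneg.mpr h1)
          rw [abs_div, abs_of_pos hZpos, abs_mul,
            abs_of_nonneg (mul_nonneg (hh0 x) (hπ'0 x)), h2]
  -- integral of the majorant
  have hintmaj : Integrable (fun x =>
      |h x * π x - h x * π' x| / Z + (h x * π' x) * (1 / Z' - 1 / Z)) ν :=
    (hgint.abs.div_const Z).add (hint'.mul_const _)
  have step1 : ∫ x, |h x * π x / Z - h x * π' x / Z'| ∂ν ≤
      (∫ x, |h x * π x - h x * π' x| ∂ν) / Z + Z' * (1 / Z' - 1 / Z) := by
    calc ∫ x, |h x * π x / Z - h x * π' x / Z'| ∂ν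
        ≤ ∫ x, (|h x * π x - h x * π' x| / Z + (h x * π' x) * (1 / Z' - 1 / Z)) ∂ν :=
          integral_mono_of_nonneg (Filter.Eventually.of_forall fun x => abs_nonneg _)
            hintmaj (Filter.Eventually.of_forall hpt)
      _ = (∫ x, |h x * π x - h x * π' x| ∂ν) / Z + Z' * (1 / Z' - 1 / Z) := by
          rw [integral_add (hgint.abs.div_const Z) (hint'.mul_const _),
            integral_div, integral_mul_const, ← hZ']
  -- key estimate : ∫|g| + (Z - Z') ≤ C * ∫|π - π'|
  have hZsub : Z - Z' = ∫ x, (h x * π x - h x * π' x) ∂ν := by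
    rw [integral_sub hint hint', hZ, hZ']
  have hdiff0 : ∫ x, (π x - π' x) ∂ν = 0 := by
    rw [integral_sub hπint hπ'int, hπ1, hπ'1, sub_self]
  have key : (∫ x, |h x * π x - h x * π' x| ∂ν) + (Z - Z') ≤
      C * ∫ x, |π x - π' x| ∂ν := by
    have hmono : ∫ x, (|h x * π x - h x * π' x| + (h x * π x - h x * π' x)) ∂ν ≤
        ∫ x, C * (|π x - π' x| + (π x - π' x)) ∂ν := by
      refine integral_mono (hgint.abs.add hgint) ((hdint.abs.add hdint).const_mul C) ?_
      intro x
      dsimp only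
      have e1 : |h x * π x - h x * π' x| = h x * |π x - π' x| := by
        rw [← mul_sub, abs_mul, abs_of_nonneg (hh0 x)]
      have e2 : h x * π x - h x * π' x = h x * (π x - π' x) := by ring
      rw [e1, e2, ← mul_add]
      exact mul_le_mul_of_nonneg_right (hC x)
        (by linarith [neg_abs_le (π x - π' x)])
    have eL : ∫ x, (|h x * π x - h x * π' x| + (h x * π x - h x * π' x)) ∂ν =
        (∫ x, |h x * π x - h x * π' x| ∂ν) + (Z - Z') := by
      rw [integral_add hgint.abs hgint, hZsub]
    have eR : ∫ x, C * (|π x - π' x| + (π x - π' x)) ∂ν =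
        C * ∫ x, |π x - π' x| ∂ν := by
      rw [integral_const_mul, integral_add hdint.abs hdint, hdiff0, add_zero]
    rw [eL, eR] at hmono
    exact hmono
  -- combine
  calc ∫ x, |h x * π x / Z - h x * π' x / Z'| ∂ν
      ≤ (∫ x, |h x * π x - h x * π' x| ∂ν) / Z + Z' * (1 / Z' - 1 / Z) := step1
    _ = ((∫ x, |h x * π x - h x * π' x| ∂ν) + (Z - Z')) / Z := by
        field_simp
    _ ≤ (C * ∫ x, |π x - π' x| ∂ν) / Z := by
        gcongr
    _ = C / Z * ∫ x, |π x - π' x| ∂ν := by ring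

/-- Global Lipschitz stability of the Bayesian posterior under the total variation
distance: `d_TV(Fμ, Fμ') ≤ (C / max (Z μ) (Z μ')) · d_TV(μ, μ')`, where the probability
measures `μ, μ'` are given by densities `π, π'` with respect to a σ-finite measure `ν`,
the likelihood `h` is bounded by `C`, and the posteriors have densities
`h·π/Z`, `h·π'/Z'` with evidences `Z = ∫ h dμ`, `Z' = ∫ h dμ'`. -/
theorem stmt0 {X : Type*} [MeasurableSpace X] (ν : Measure X) [SigmaFinite ν]
    (π π' h : X → ℝ) (C Z Z' : ℝ)
    (hπm : Measurable π) (hπ'm : Measurable π') (hhm : Measurable h)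
    (hπ0 : ∀ x, 0 ≤ π x) (hπ'0 : ∀ x, 0 ≤ π' x) (hh0 : ∀ x, 0 ≤ h x)
    (hπ1 : ∫ x, π x ∂ν = 1) (hπ'1 : ∫ x, π' x ∂ν = 1)
    (hC : ∀ x, h x ≤ C)
    (hZ : Z = ∫ x, h x * π x ∂ν) (hZ' : Z' = ∫ x, h x * π' x ∂ν)
    (hZpos : 0 < Z) (hZ'pos : 0 < Z')
    (hint : Integrable (fun x => h x * π x) ν)
    (hint' : Integrable (fun x => h x * π' x) ν) :
    (1 / 2) * ∫ x, |h x * π x / Z - h x * π' x / Z'| ∂ν ≤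
      C / max Z Z' * ((1 / 2) * ∫ x, |π x - π' x| ∂ν) := by
  rcases le_total Z' Z with hle | hle
  · rw [max_eq_left hle]
    have := aux_tv ν π π' h C Z Z' hπ0 hπ'0 hh0 hπ1 hπ'1 hC hZ hZ' hZpos hZ'pos
      hint hint' hle
    linarith
  · rw [max_eq_right hle]
    have := aux_tv ν π' π h C Z' Z hπ'0 hπ0 hh0 hπ'1 hπ1 hC hZ' hZ hZ'pos hZpos
      hint' hint hle
    have e1 : ∫ x, |h x * π' x / Z' - h x * π x / Z| ∂ν =
        ∫ x, |h x * π x / Z - h x * π' x / Z'| ∂ν := by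
      simp [abs_sub_comm]
    have e2 : ∫ x, |π' x - π x| ∂ν = ∫ x, |π x - π' x| ∂ν := by
      simp [abs_sub_comm]
    rw [e1, e2] at this
    linarith
end

section
/- Let μ and μ′ be probability measures on (X, B(X)), both absolutely continuous with respect to a σ-finite measure ν. Let h: X → [0,∞) be measurable with C := sup_{x∈X} h(x) < ∞, and suppose 0 < Z(μ) := ∫ h dμ < ∞ and 0 < Z(μ′) := ∫ h dμ′ < ∞. Define posteriors Fμ(A) := (∫_A h dμ)/Z(μ) and similarly Fμ′. Then the Hellinger distance satisfies d_H(Fμ, Fμ′) ≤ 2·sqrt(C / Z(μ)) · d_H(μ, μ′). -/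
open MeasureTheory

set_option maxHeartbeats 2000000 in
/-- Global Lipschitz stability of the Bayesian posterior under the Hellinger distance:
`d_H(Fμ, Fμ') ≤ 2·√(C / Z(μ)) · d_H(μ, μ')`, where `μ, μ'` are probability measures with
densities `π, π'` w.r.t. a σ-finite `ν`, `h` is a likelihood bounded by `C`, and the
posteriors have densities `h·π/Z`, `h·π'/Z'`. -/
theorem stmt1 {X : Type*} [MeasurableSpace X] (ν : Measure X) [SigmaFinite ν]
    (π π' h : X → ℝ) (C Z Z' : ℝ)
    (hπm : Measurable π) (hπ'm : Measurable π') (hhm : Measurable h)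
    (hπ0 : ∀ x, 0 ≤ π x) (hπ'0 : ∀ x, 0 ≤ π' x) (hh0 : ∀ x, 0 ≤ h x)
    (hπ1 : ∫ x, π x ∂ν = 1) (hπ'1 : ∫ x, π' x ∂ν = 1)
    (hC : ∀ x, h x ≤ C)
    (hZ : Z = ∫ x, h x * π x ∂ν) (hZ' : Z' = ∫ x, h x * π' x ∂ν)
    (hZpos : 0 < Z) (hZ'pos : 0 < Z')
    (hint : Integrable (fun x => h x * π x) ν)
    (hint' : Integrable (fun x => h x * π' x) ν) :
    Real.sqrt ((1 / 2) * ∫ x,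
        (Real.sqrt (h x * π x / Z) - Real.sqrt (h x * π' x / Z')) ^ 2 ∂ν) ≤
      2 * Real.sqrt (C / Z) *
        Real.sqrt ((1 / 2) * ∫ x, (Real.sqrt (π x) - Real.sqrt (π' x)) ^ 2 ∂ν) := by
  set f : X → ℝ := fun x => Real.sqrt (h x * π x) with hf
  set g : X → ℝ := fun x => Real.sqrt (h x * π' x) with hg
  set sZ : ℝ := Real.sqrt Z with hsZ
  set sZ' : ℝ := Real.sqrt Z' with hsZ'
  have hsZpos : 0 < sZ := Real.sqrt_pos.2 hZpos
  have hsZ'pos : 0 < sZ' := Real.sqrt_pos.2 hZ'pos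
  have hsZ2 : sZ ^ 2 = Z := Real.sq_sqrt hZpos.le
  have hsZ'2 : sZ' ^ 2 = Z' := Real.sq_sqrt hZ'pos.le
  -- integrability of π, π'
  have intπ : Integrable π ν := by
    by_contra hcon
    rw [integral_undef hcon] at hπ1
    norm_num at hπ1
  have intπ' : Integrable π' ν := by
    by_contra hcon
    rw [integral_undef hcon] at hπ'1
    norm_num at hπ'1
  -- C is positive
  have hCZ : Z ≤ C := by
    have : ∫ x, h x * π x ∂ν ≤ ∫ x, C * π x ∂ν := by
      refine integral_mono hint (intπ.const_mul C) fun x => ?_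
      exact mul_le_mul_of_nonneg_right (hC x) (hπ0 x)
    rw [integral_const_mul, hπ1, mul_one] at this
    rw [hZ]; exact this
  have hCpos : 0 < C := lt_of_lt_of_le hZpos hCZ
  -- measurability helpers
  have hfm : Measurable f := (hhm.mul hπm).sqrt
  have hgm : Measurable g := (hhm.mul hπ'm).sqrt
  have hπs : Measurable (fun x => Real.sqrt (π x)) := hπm.sqrt
  have hπ's : Measurable (fun x => Real.sqrt (π' x)) := hπ'm.sqrt
  have hf0 : ∀ x, 0 ≤ f x := fun x => Real.sqrt_nonneg _
  have hg0 : ∀ x, 0 ≤ g x := fun x => Real.sqrt_nonneg _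
  have hf2 : ∀ x, f x ^ 2 = h x * π x := fun x =>
    Real.sq_sqrt (mul_nonneg (hh0 x) (hπ0 x))
  have hg2 : ∀ x, g x ^ 2 = h x * π' x := fun x =>
    Real.sq_sqrt (mul_nonneg (hh0 x) (hπ'0 x))
  -- integrability of cross terms
  have int_fg : Integrable (fun x => f x * g x) ν := by
    refine Integrable.mono' ((hint.add hint').div_const 2) (hfm.mul hgm).aestronglyMeasurable
      (Filter.Eventually.of_forall fun x => ?_)
    rw [Real.norm_of_nonneg (mul_nonneg (hf0 x) (hg0 x))]
    have h1 := sq_nonneg (f x - g x)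
    have := hf2 x; have := hg2 x
    simp only [Pi.add_apply]
    nlinarith
  have int_ss : Integrable (fun x => Real.sqrt (π x) * Real.sqrt (π' x)) ν := by
    refine Integrable.mono' ((intπ.add intπ').div_const 2) (hπs.mul hπ's).aestronglyMeasurable
      (Filter.Eventually.of_forall fun x => ?_)
    rw [Real.norm_of_nonneg (mul_nonneg (Real.sqrt_nonneg _) (Real.sqrt_nonneg _))]
    have h1 := sq_nonneg (Real.sqrt (π x) - Real.sqrt (π' x))
    have h2 := Real.sq_sqrt (hπ0 x); have h3 := Real.sq_sqrt (hπ'0 x)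
    simp only [Pi.add_apply]
    nlinarith
  -- expansion of (f-g)^2 and its integrability
  have Texp : (fun x => (f x - g x) ^ 2)
      = fun x => h x * π x + h x * π' x - 2 * (f x * g x) := by
    funext x
    have := hf2 x; have := hg2 x
    nlinarith [sq_nonneg (f x - g x)]
  have int_T : Integrable (fun x => (f x - g x) ^ 2) ν := by
    rw [Texp]; exact (hint.add hint').sub (int_fg.const_mul 2)
  have dexp : (fun x => (Real.sqrt (π x) - Real.sqrt (π' x)) ^ 2)
      = fun x => π x + π' x - 2 * (Real.sqrt (π x) * Real.sqrt (π' x)) := by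
    funext x
    have h2 := Real.sq_sqrt (hπ0 x); have h3 := Real.sq_sqrt (hπ'0 x)
    nlinarith [sq_nonneg (Real.sqrt (π x) - Real.sqrt (π' x))]
  have int_d : Integrable (fun x => (Real.sqrt (π x) - Real.sqrt (π' x)) ^ 2) ν := by
    rw [dexp]; exact (intπ.add intπ').sub (int_ss.const_mul 2)
  set T : ℝ := ∫ x, (f x - g x) ^ 2 ∂ν with hT
  set d2 : ℝ := ∫ x, (Real.sqrt (π x) - Real.sqrt (π' x)) ^ 2 ∂ν with hd2
  have hd2nn : 0 ≤ d2 := integral_nonneg fun x => sq_nonneg _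
  have hTnn : 0 ≤ T := integral_nonneg fun x => sq_nonneg _
  -- T ≤ C * d2
  have hTd : T ≤ C * d2 := by
    have : T ≤ ∫ x, C * (Real.sqrt (π x) - Real.sqrt (π' x)) ^ 2 ∂ν := by
      refine integral_mono int_T (int_d.const_mul C) fun x => ?_
      have e1 : f x = Real.sqrt (h x) * Real.sqrt (π x) := Real.sqrt_mul (hh0 x) _
      have e2 : g x = Real.sqrt (h x) * Real.sqrt (π' x) := Real.sqrt_mul (hh0 x) _
      have e3 : Real.sqrt (h x) ^ 2 = h x := Real.sq_sqrt (hh0 x)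
      have : (f x - g x) ^ 2 = h x * (Real.sqrt (π x) - Real.sqrt (π' x)) ^ 2 := by
        rw [e1, e2]; nlinarith [sq_nonneg (Real.sqrt (π x) - Real.sqrt (π' x))]
      rw [this]
      exact mul_le_mul_of_nonneg_right (hC x) (sq_nonneg _)
    rwa [integral_const_mul] at this
  -- Cauchy–Schwarz: ∫ f g ≤ sZ * sZ'
  have hCS : ∫ x, f x * g x ∂ν ≤ sZ * sZ' := by
    set s : ℝ := sZ' / sZ with hs
    have hspos : 0 < s := div_pos hsZ'pos hsZpos
    have step : ∫ x, f x * g x ∂ν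
        ≤ ∫ x, (s * (h x * π x) + (h x * π' x) / s) / 2 ∂ν := by
      refine integral_mono int_fg (((hint.const_mul s).add (hint'.div_const s)).div_const 2)
        fun x => ?_
      have hA := hf2 x; have hB := hg2 x
      have hkey := sq_nonneg (s * f x - g x)
      have expand : (s * (h x * π x) + (h x * π' x) / s) / 2 - f x * g x
          = (s * f x - g x) ^ 2 / (2 * s) := by
        rw [← hA, ← hB]
        field_simp [hspos.ne']
        ring
      have hnn : 0 ≤ (s * f x - g x) ^ 2 / (2 * s) :=
        div_nonneg hkey (by positivity)
      linarith [expand, hnn]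
    have comp : ∫ x, (s * (h x * π x) + (h x * π' x) / s) / 2 ∂ν
        = (s * Z + Z' / s) / 2 := by
      rw [integral_div, integral_add (hint.const_mul s) (hint'.div_const s),
        integral_const_mul, integral_div, ← hZ, ← hZ']
    have val : (s * Z + Z' / s) / 2 = sZ * sZ' := by
      rw [hs, ← hsZ2, ← hsZ'2]
      field_simp [hsZpos.ne', hsZ'pos.ne']
      ring
    calc ∫ x, f x * g x ∂ν ≤ (s * Z + Z' / s) / 2 := by rw [← comp]; exact step
      _ = sZ * sZ' := val
  -- T = Z + Z' - 2 ∫ fg, hence (sZ - sZ')^2 ≤ T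
  have hTval : T = Z + Z' - 2 * ∫ x, f x * g x ∂ν := by
    have i1 : ∫ x, (h x * π x + h x * π' x - 2 * (f x * g x)) ∂ν
        = (∫ x, (h x * π x + h x * π' x) ∂ν) - ∫ x, 2 * (f x * g x) ∂ν :=
      integral_sub (hint.add hint') (int_fg.const_mul 2)
    have i2 : ∫ x, (h x * π x + h x * π' x) ∂ν
        = (∫ x, h x * π x ∂ν) + ∫ x, h x * π' x ∂ν := integral_add hint hint'
    rw [hT, Texp, i1, i2, integral_const_mul, ← hZ, ← hZ']
  have hdiff : (sZ - sZ') ^ 2 ≤ T := by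
    rw [hTval]
    nlinarith [hCS, hsZ2, hsZ'2]
  -- main pointwise bound and integral bound for S
  set S : ℝ := ∫ x, (Real.sqrt (h x * π x / Z) - Real.sqrt (h x * π' x / Z')) ^ 2 ∂ν with hS
  have hSbound : S ≤ (2 / Z) * T + (2 * (1 / sZ - 1 / sZ') ^ 2) * Z' := by
    have mono : S ≤ ∫ x, ((2 / Z) * (f x - g x) ^ 2
        + (2 * (1 / sZ - 1 / sZ') ^ 2) * (h x * π' x)) ∂ν := by
      refine integral_mono_of_nonneg (Filter.Eventually.of_forall fun x => sq_nonneg _)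
        ((int_T.const_mul _).add (hint'.const_mul _))
        (Filter.Eventually.of_forall fun x => ?_)
      have e1 : Real.sqrt (h x * π x / Z) = f x / sZ := by
        rw [hsZ, hf, Real.sqrt_div (mul_nonneg (hh0 x) (hπ0 x))]
      have e2 : Real.sqrt (h x * π' x / Z') = g x / sZ' := by
        rw [hsZ', hg, Real.sqrt_div (mul_nonneg (hh0 x) (hπ'0 x))]
      have esplit : f x / sZ - g x / sZ'
          = (f x - g x) / sZ + g x * (1 / sZ - 1 / sZ') := by
        field_simp
        ring
      have hgg := hg2 x
      calc (Real.sqrt (h x * π x / Z) - Real.sqrt (h x * π' x / Z')) ^ 2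
          = ((f x - g x) / sZ + g x * (1 / sZ - 1 / sZ')) ^ 2 := by rw [e1, e2, esplit]
        _ ≤ 2 * ((f x - g x) / sZ) ^ 2 + 2 * (g x * (1 / sZ - 1 / sZ')) ^ 2 := by
            nlinarith [sq_nonneg ((f x - g x) / sZ - g x * (1 / sZ - 1 / sZ'))]
        _ = (2 / Z) * (f x - g x) ^ 2 + (2 * (1 / sZ - 1 / sZ') ^ 2) * (h x * π' x) := by
            rw [div_pow, hsZ2, mul_pow, hgg]; ring
    have comp : ∫ x, ((2 / Z) * (f x - g x) ^ 2
        + (2 * (1 / sZ - 1 / sZ') ^ 2) * (h x * π' x)) ∂ν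
        = (2 / Z) * T + (2 * (1 / sZ - 1 / sZ') ^ 2) * Z' := by
      rw [integral_add (int_T.const_mul _) (hint'.const_mul _), integral_const_mul,
        integral_const_mul, ← hT, ← hZ']
    rw [← comp]; exact mono
  -- second term: 2 (1/sZ - 1/sZ')^2 Z' = 2 (sZ - sZ')^2 / Z ≤ 2 T / Z
  have hsecond : (2 * (1 / sZ - 1 / sZ') ^ 2) * Z' = 2 * (sZ - sZ') ^ 2 / Z := by
    rw [← hsZ2, ← hsZ'2]
    field_simp [hsZpos.ne', hsZ'pos.ne']
    ring
  have hSfinal : S ≤ 4 * (C * d2) / Z := by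
    have h1 : S ≤ (2 / Z) * T + 2 * (sZ - sZ') ^ 2 / Z := by
      rw [← hsecond]; exact hSbound
    have h2 : 2 * (sZ - sZ') ^ 2 / Z ≤ 2 * T / Z := by
      gcongr
    have h3 : (2 / Z) * T + 2 * T / Z = 4 * T / Z := by ring
    have h4 : 4 * T / Z ≤ 4 * (C * d2) / Z := by
      gcongr
    linarith [h1, h2, h3, h4]
  -- conclude
  have hCZnn : 0 ≤ C / Z := div_nonneg hCpos.le hZpos.le
  have hrhs_sq : (2 * Real.sqrt (C / Z) * Real.sqrt ((1 / 2) * d2)) ^ 2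
      = 4 * (C / Z) * ((1 / 2) * d2) := by
    rw [mul_pow, mul_pow, Real.sq_sqrt hCZnn,
      Real.sq_sqrt (by positivity : (0:ℝ) ≤ (1 / 2) * d2)]
    ring
  have hle : (1 / 2) * S ≤ (2 * Real.sqrt (C / Z) * Real.sqrt ((1 / 2) * d2)) ^ 2 := by
    rw [hrhs_sq]
    calc (1 / 2) * S ≤ (1 / 2) * (4 * (C * d2) / Z) := by linarith [hSfinal]
      _ = 4 * (C / Z) * ((1 / 2) * d2) := by ring
  calc Real.sqrt ((1 / 2) * S)
      ≤ Real.sqrt ((2 * Real.sqrt (C / Z) * Real.sqrt ((1 / 2) * d2)) ^ 2) :=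
        Real.sqrt_le_sqrt hle
    _ = 2 * Real.sqrt (C / Z) * Real.sqrt ((1 / 2) * d2) :=
        Real.sqrt_sq (by positivity)
end

section
/- Let μ, μ′ be probability measures on a Polish metric space (X, d_X) with finite first moments, and let h: X → [0,∞) be bounded by C := sup h < ∞ and globally Lipschitz with constant L := ||h||_Lip < ∞. Suppose the diameter D := sup_{x,x′} d_X(x,x′) < ∞, and 0 < Z(μ) := ∫ h dμ < ∞, 0 < Z(μ′) := ∫ h dμ′ < ∞. Define posteriors Fμ(A) := (∫_A h dμ)/Z(μ) and similarly Fμ′. Then W₁(Fμ, Fμ′) ≤ ((2DL + C)/Z(μ)) · W₁(μ, μ′). -/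
/-!
Fix a coupling `γ` of `μ` and `μ'`, with cost `c = ∫ d dγ`. Reweighting `γ` by
`min (h x / Z) (h x' / Z')` gives a sub-coupling of the two posteriors which costs at most
`(C / Z) c`. Its missing mass is `∫ (h x / Z - h x' / Z')⁺ dγ ≤ (2 L / Z) c`: one `L c / Z` comes
from the Lipschitz bound on `h`, the other from `Z' - Z ≤ L c`. The missing mass is coupled by a
normalized product of the two residual measures, at cost at most `D` per unit of mass. Taking the
infimum over `γ` gives the bound.
-/

open MeasureTheory
open scoped ENNReal

noncomputable def W1 {X : Type*} [MeasurableSpace X] [PseudoEMetricSpace X]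
    (μ μ' : Measure X) : ℝ≥0∞ :=
  ⨅ γ ∈ {γ : Measure (X × X) | γ.map Prod.fst = μ ∧ γ.map Prod.snd = μ'},
    ∫⁻ p, edist p.1 p.2 ∂γ

open Set
open scoped NNReal

namespace MeasureTheory.Measure

variable {X Y : Type*} [MeasurableSpace X] [MeasurableSpace Y]

lemma map_apply_univ (ν : Measure X) {φ : X → Y} (hφ : Measurable φ) :
    ν.map φ univ = ν univ := by
  rw [map_apply hφ MeasurableSet.univ, preimage_univ]

lemma map_fst_inv_smul_prod (α : Measure X) (β : Measure Y) [IsFiniteMeasure α]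
    [IsFiniteMeasure β] (h : α univ = β univ) : ((β univ)⁻¹ • α.prod β).map Prod.fst = α := by
  rw [Measure.map_smul, map_fst_prod, smul_smul]
  rcases eq_or_ne (β univ) 0 with hβ | hβ
  · rw [measure_univ_eq_zero.mp (h.trans hβ)]
    simp
  · rw [ENNReal.inv_mul_cancel hβ (measure_ne_top β univ), one_smul]

lemma map_snd_inv_smul_prod (α : Measure X) (β : Measure Y) [IsFiniteMeasure α]
    [IsFiniteMeasure β] (h : α univ = β univ) : ((β univ)⁻¹ • α.prod β).map Prod.snd = β := by
  rw [Measure.map_smul, map_snd_prod, smul_smul, h]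
  rcases eq_or_ne (β univ) 0 with hβ | hβ
  · rw [measure_univ_eq_zero.mp hβ]
    simp
  · rw [ENNReal.inv_mul_cancel hβ (measure_ne_top β univ), one_smul]

lemma map_withDensity_le {γ : Measure X} {φ : X → Y} (hφ : Measurable φ) {f : Y → ℝ≥0∞}
    (hf : Measurable f) {ρ : X → ℝ≥0∞} (hρ : ∀ x, ρ x ≤ f (φ x)) :
    (γ.withDensity ρ).map φ ≤ (γ.map φ).withDensity f := by
  refine le_iff.mpr fun s hs => ?_
  rw [map_apply hφ hs, withDensity_apply _ (hφ hs), withDensity_apply _ hs,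
    setLIntegral_map hs hf hφ]
  exact lintegral_mono fun x => hρ x

end MeasureTheory.Measure

lemma ENNReal.mul_inv_tsub_inv_le {a b : ℝ≥0∞} (ha : a ≠ 0) (hb : b ≠ ∞) :
    b * (a⁻¹ - b⁻¹) ≤ a⁻¹ * (b - a) := by
  rcases le_total b a with hba | hab
  · simp [tsub_eq_zero_of_le (ENNReal.inv_le_inv.mpr hba)]
  · have hb0 : b ≠ 0 := (pos_iff_ne_zero.mpr ha |>.trans_le hab).ne'
    rw [ENNReal.mul_sub fun _ _ => hb, ENNReal.mul_inv_cancel hb0 hb,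
      ENNReal.mul_sub fun _ _ => ENNReal.inv_ne_top.mpr ha,
      ENNReal.inv_mul_cancel ha (ne_top_of_le_ne_top hb hab), mul_comm]

lemma LipschitzWith.ofReal_sub_le {X : Type*} [PseudoEMetricSpace X] {f : X → ℝ} {K : ℝ≥0}
    (hf : LipschitzWith K f) (x y : X) :
    ENNReal.ofReal (f x) - ENNReal.ofReal (f y) ≤ K * edist x y :=
  calc ENNReal.ofReal (f x) - ENNReal.ofReal (f y) ≤ ENNReal.ofReal (f x - f y) :=
        tsub_le_iff_right.mpr (by simpa using ENNReal.ofReal_add_le (p := f x - f y) (q := f y))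
    _ ≤ edist (f x) (f y) := by
        rw [edist_dist, Real.dist_eq]
        exact ENNReal.ofReal_le_ofReal (le_abs_self _)
    _ ≤ K * edist x y := hf x y

section Wasserstein

variable {X : Type*} [MeasurableSpace X] [PseudoEMetricSpace X] {μ μ' : Measure X}

lemma W1_le_lintegral {γ : Measure (X × X)} (hfst : γ.map Prod.fst = μ)
    (hsnd : γ.map Prod.snd = μ') : W1 μ μ' ≤ ∫⁻ p, edist p.1 p.2 ∂γ :=
  iInf₂_le γ ⟨hfst, hsnd⟩

lemma le_mul_W1_of_forall_coupling [IsProbabilityMeasure μ] [IsProbabilityMeasure μ']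
    {a K : ℝ≥0∞} (hK : K ≠ ∞)
    (h : ∀ γ : Measure (X × X), γ.map Prod.fst = μ → γ.map Prod.snd = μ' →
      a ≤ K * ∫⁻ p, edist p.1 p.2 ∂γ) :
    a ≤ K * W1 μ μ' := by
  rcases eq_or_ne K 0 with rfl | hK0
  · simpa using h (μ.prod μ') (by simp) (by simp)
  · simp_rw [W1, ENNReal.mul_iInf_of_ne hK0 hK]
    exact le_iInf₂ fun γ hγ => h γ hγ.1 hγ.2

lemma W1_le_lintegral_add_of_map_le [IsProbabilityMeasure μ] [IsProbabilityMeasure μ']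
    {γ : Measure (X × X)} (hfst : γ.map Prod.fst ≤ μ) (hsnd : γ.map Prod.snd ≤ μ')
    {D : ℝ≥0∞} (hD : ∀ x y : X, edist x y ≤ D) :
    W1 μ μ' ≤ ∫⁻ p, edist p.1 p.2 ∂γ + D * (1 - γ univ) := by
  have hγ : γ univ ≤ 1 := by
    simpa [γ.map_apply_univ measurable_fst] using Measure.le_iff'.mp hfst univ
  have : IsFiniteMeasure γ := ⟨hγ.trans_lt ENNReal.one_lt_top⟩
  set α := μ - γ.map Prod.fst
  set β := μ' - γ.map Prod.snd
  have hα : α univ = 1 - γ univ := by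
    rw [Measure.sub_apply MeasurableSet.univ hfst, measure_univ, γ.map_apply_univ measurable_fst]
  have hβ : β univ = 1 - γ univ := by
    rw [Measure.sub_apply MeasurableSet.univ hsnd, measure_univ, γ.map_apply_univ measurable_snd]
  set residual := (β univ)⁻¹ • α.prod β
  have hres_fst : residual.map Prod.fst = α := α.map_fst_inv_smul_prod β (hα.trans hβ.symm)
  have hres_snd : residual.map Prod.snd = β := α.map_snd_inv_smul_prod β (hα.trans hβ.symm)
  have hres_cost : ∫⁻ p, edist p.1 p.2 ∂residual ≤ D * (1 - γ univ) :=
    calc ∫⁻ p, edist p.1 p.2 ∂residual ≤ ∫⁻ _, D ∂residual := lintegral_mono fun p => hD p.1 p.2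
      _ = D * (1 - γ univ) := by
        rw [lintegral_const, ← residual.map_apply_univ measurable_fst, hres_fst, hα]
  calc W1 μ μ' ≤ ∫⁻ p, edist p.1 p.2 ∂(γ + residual) := by
        refine W1_le_lintegral ?_ ?_
        · rw [Measure.map_add _ _ measurable_fst, hres_fst, add_comm,
            Measure.sub_add_cancel_of_le hfst]
        · rw [Measure.map_add _ _ measurable_snd, hres_snd, add_comm,
            Measure.sub_add_cancel_of_le hsnd]
    _ ≤ ∫⁻ p, edist p.1 p.2 ∂γ + D * (1 - γ univ) := by
        rw [lintegral_add_measure]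
        gcongr

lemma W1_withDensity_le {γ : Measure (X × X)} (hfst : γ.map Prod.fst = μ)
    (hsnd : γ.map Prod.snd = μ') {f f' : X → ℝ≥0∞} (hf : Measurable f) (hf' : Measurable f')
    (hf1 : ∫⁻ x, f x ∂μ = 1) (hf'1 : ∫⁻ x, f' x ∂μ' = 1) {D : ℝ≥0∞}
    (hD : ∀ x y : X, edist x y ≤ D) :
    W1 (μ.withDensity f) (μ'.withDensity f') ≤
      ∫⁻ p, min (f p.1) (f' p.2) * edist p.1 p.2 ∂γ + D * ∫⁻ p, (f p.1 - f' p.2) ∂γ := by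
  have : IsProbabilityMeasure (μ.withDensity f) :=
    ⟨by rw [withDensity_apply _ MeasurableSet.univ, setLIntegral_univ, hf1]⟩
  have : IsProbabilityMeasure (μ'.withDensity f') :=
    ⟨by rw [withDensity_apply _ MeasurableSet.univ, setLIntegral_univ, hf'1]⟩
  set ρ : X × X → ℝ≥0∞ := fun p => min (f p.1) (f' p.2)
  have hρ : Measurable ρ := (hf.comp measurable_fst).min (hf'.comp measurable_snd)
  have hmass : 1 - γ.withDensity ρ univ ≤ ∫⁻ p, (f p.1 - f' p.2) ∂γ :=
    calc 1 - γ.withDensity ρ univ = ∫⁻ p, f p.1 ∂γ - ∫⁻ p, ρ p ∂γ := by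
          rw [withDensity_apply _ MeasurableSet.univ, setLIntegral_univ,
            ← lintegral_map hf measurable_fst, hfst, hf1]
      _ ≤ ∫⁻ p, (f p.1 - ρ p) ∂γ := lintegral_sub_le _ _ hρ
      _ = ∫⁻ p, (f p.1 - f' p.2) ∂γ := by simp_rw [ρ, tsub_min]
  calc W1 (μ.withDensity f) (μ'.withDensity f')
      ≤ ∫⁻ p, edist p.1 p.2 ∂γ.withDensity ρ + D * (1 - γ.withDensity ρ univ) := by
        refine W1_le_lintegral_add_of_map_le ?_ ?_ hD
        · exact hfst ▸ Measure.map_withDensity_le measurable_fst hf fun p => min_le_left _ _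
        · exact hsnd ▸ Measure.map_withDensity_le measurable_snd hf' fun p => min_le_right _ _
    _ ≤ ∫⁻ p, ρ p * edist p.1 p.2 ∂γ + D * ∫⁻ p, (f p.1 - f' p.2) ∂γ := by
        refine add_le_add (lintegral_withDensity_le_lintegral_mul γ hρ _) ?_
        gcongr

lemma lintegral_inv_mul_tsub_inv_mul_le {γ : Measure (X × X)} (hfst : γ.map Prod.fst = μ)
    (hsnd : γ.map Prod.snd = μ') {g : X → ℝ≥0∞} (hg : Measurable g) {K : ℝ≥0∞} (hK : K ≠ ∞)
    (hlip : ∀ x y, g x - g y ≤ K * edist x y) {Z Z' : ℝ≥0∞} (hZ : ∫⁻ x, g x ∂μ = Z)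
    (hZ' : ∫⁻ x, g x ∂μ' = Z') (hZ0 : Z ≠ 0) (hZ'top : Z' ≠ ∞) :
    ∫⁻ p, (Z⁻¹ * g p.1 - Z'⁻¹ * g p.2) ∂γ ≤ 2 * K * Z⁻¹ * ∫⁻ p, edist p.1 p.2 ∂γ := by
  have hg₁ : Measurable fun p : X × X => g p.1 := hg.comp measurable_fst
  have hg₂ : Measurable fun p : X × X => g p.2 := hg.comp measurable_snd
  have hZg₂ : ∫⁻ p, g p.2 ∂γ = Z' := by rw [← lintegral_map hg measurable_snd, hsnd, hZ']
  have hZ'_sub_Z : Z' - Z ≤ K * ∫⁻ p, edist p.1 p.2 ∂γ :=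
    calc Z' - Z = ∫⁻ p, g p.2 ∂γ - ∫⁻ p, g p.1 ∂γ := by
          rw [hZg₂, ← lintegral_map hg measurable_fst, hfst, hZ]
      _ ≤ ∫⁻ p, (g p.2 - g p.1) ∂γ := lintegral_sub_le _ _ hg₁
      _ ≤ ∫⁻ p, K * edist p.1 p.2 ∂γ :=
          lintegral_mono fun p => (hlip p.2 p.1).trans_eq (by rw [edist_comm])
      _ = K * ∫⁻ p, edist p.1 p.2 ∂γ := lintegral_const_mul' _ _ hK
  have hpoint (p : X × X) : Z⁻¹ * g p.1 - Z'⁻¹ * g p.2 ≤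
      Z⁻¹ * K * edist p.1 p.2 + (Z⁻¹ - Z'⁻¹) * g p.2 :=
    calc Z⁻¹ * g p.1 - Z'⁻¹ * g p.2
        ≤ (Z⁻¹ * g p.1 - Z⁻¹ * g p.2) + (Z⁻¹ * g p.2 - Z'⁻¹ * g p.2) := tsub_le_tsub_add_tsub
      _ ≤ Z⁻¹ * (g p.1 - g p.2) + (Z⁻¹ - Z'⁻¹) * g p.2 := add_le_add le_mul_tsub le_tsub_mul
      _ ≤ Z⁻¹ * K * edist p.1 p.2 + (Z⁻¹ - Z'⁻¹) * g p.2 := by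
          rw [mul_assoc]
          gcongr
          exact hlip p.1 p.2
  calc ∫⁻ p, (Z⁻¹ * g p.1 - Z'⁻¹ * g p.2) ∂γ
      ≤ ∫⁻ p, (Z⁻¹ * K * edist p.1 p.2 + (Z⁻¹ - Z'⁻¹) * g p.2) ∂γ := lintegral_mono hpoint
    _ = Z⁻¹ * K * ∫⁻ p, edist p.1 p.2 ∂γ + Z' * (Z⁻¹ - Z'⁻¹) := by
        rw [lintegral_add_right _ (hg₂.const_mul _),
          lintegral_const_mul' _ _ (ENNReal.mul_ne_top (ENNReal.inv_ne_top.mpr hZ0) hK),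
          lintegral_const_mul _ hg₂, hZg₂, mul_comm Z']
    _ ≤ Z⁻¹ * K * ∫⁻ p, edist p.1 p.2 ∂γ + Z⁻¹ * (K * ∫⁻ p, edist p.1 p.2 ∂γ) := by
        gcongr _ + ?_
        exact (ENNReal.mul_inv_tsub_inv_le hZ0 hZ'top).trans (by gcongr)
    _ = 2 * K * Z⁻¹ * ∫⁻ p, edist p.1 p.2 ∂γ := by ring

theorem W1_inv_smul_withDensity_le [IsProbabilityMeasure μ] [IsProbabilityMeasure μ']
    {g : X → ℝ≥0∞} (hg : Measurable g) {C K D : ℝ≥0} (hC : ∀ x, g x ≤ C)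
    (hlip : ∀ x y, g x - g y ≤ K * edist x y) (hD : ∀ x y : X, edist x y ≤ D)
    {Z Z' : ℝ≥0∞} (hZ : ∫⁻ x, g x ∂μ = Z) (hZ' : ∫⁻ x, g x ∂μ' = Z')
    (hZ0 : Z ≠ 0) (hZtop : Z ≠ ∞) (hZ'0 : Z' ≠ 0) (hZ'top : Z' ≠ ∞) :
    W1 (Z⁻¹ • μ.withDensity g) (Z'⁻¹ • μ'.withDensity g) ≤
      (2 * D * K + C) * Z⁻¹ * W1 μ μ' := by
  have hmass : ∫⁻ x, Z⁻¹ * g x ∂μ = 1 := by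
    rw [lintegral_const_mul _ hg, hZ, ENNReal.inv_mul_cancel hZ0 hZtop]
  have hmass' : ∫⁻ x, Z'⁻¹ * g x ∂μ' = 1 := by
    rw [lintegral_const_mul _ hg, hZ', ENNReal.inv_mul_cancel hZ'0 hZ'top]
  have hZinv : Z⁻¹ ≠ ∞ := ENNReal.inv_ne_top.mpr hZ0
  rw [← withDensity_smul _ hg, ← withDensity_smul _ hg]
  refine le_mul_W1_of_forall_coupling (ENNReal.mul_ne_top (by finiteness) hZinv)
    fun γ hfst hsnd => ?_
  calc W1 _ _ ≤ ∫⁻ p, min (Z⁻¹ * g p.1) (Z'⁻¹ * g p.2) * edist p.1 p.2 ∂γ +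
        D * ∫⁻ p, (Z⁻¹ * g p.1 - Z'⁻¹ * g p.2) ∂γ :=
        W1_withDensity_le hfst hsnd (hg.const_mul _) (hg.const_mul _) hmass hmass' hD
    _ ≤ ∫⁻ p, C * Z⁻¹ * edist p.1 p.2 ∂γ + D * (2 * K * Z⁻¹ * ∫⁻ p, edist p.1 p.2 ∂γ) := by
        gcongr ?_ + _ * ?_
        · refine lintegral_mono fun p => ?_
          gcongr
          exact (min_le_left _ _).trans (by rw [mul_comm]; gcongr; exact hC p.1)
        · exact lintegral_inv_mul_tsub_inv_mul_le hfst hsnd hg ENNReal.coe_ne_top hlip hZ hZ'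
            hZ0 hZ'top
    _ = (2 * D * K + C) * Z⁻¹ * ∫⁻ p, edist p.1 p.2 ∂γ := by
        rw [lintegral_const_mul' _ _ (ENNReal.mul_ne_top ENNReal.coe_ne_top hZinv)]
        ring

end Wasserstein

theorem stmt2_general {X : Type*} [MetricSpace X] [MeasurableSpace X]
    (μ μ' : Measure X) [IsProbabilityMeasure μ] [IsProbabilityMeasure μ']
    (h : X → ℝ) (C L D Z Z' : ℝ)
    (hhm : Measurable h) (hh0 : ∀ x, 0 ≤ h x)
    (hC : ∀ x, h x ≤ C) (hL0 : 0 ≤ L) (hL : LipschitzWith (Real.toNNReal L) h)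
    (hD : ∀ x y : X, dist x y ≤ D)
    (hZ : Z = ∫ x, h x ∂μ) (hZ' : Z' = ∫ x, h x ∂μ')
    (hZpos : 0 < Z) (hZ'pos : 0 < Z') :
    W1 ((ENNReal.ofReal Z)⁻¹ • μ.withDensity (fun x => ENNReal.ofReal (h x)))
       ((ENNReal.ofReal Z')⁻¹ • μ'.withDensity (fun x => ENNReal.ofReal (h x)))
      ≤ ENNReal.ofReal ((2 * D * L + C) / Z) * W1 μ μ' := by
  obtain ⟨x₀⟩ := nonempty_of_isProbabilityMeasure μ
  have hbdd (x : X) : ‖h x‖ ≤ C := by rw [Real.norm_of_nonneg (hh0 x)]; exact hC x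
  have hlintegral (ν : Measure X) [IsFiniteMeasure ν] :
      ∫⁻ x, ENNReal.ofReal (h x) ∂ν = ENNReal.ofReal (∫ x, h x ∂ν) :=
    (ofReal_integral_eq_lintegral_ofReal
      (.of_bound hhm.aestronglyMeasurable C (ae_of_all _ hbdd)) (ae_of_all _ hh0)).symm
  have hconst : ENNReal.ofReal ((2 * D * L + C) / Z) =
      (2 * ENNReal.ofReal D * ENNReal.ofReal L + ENNReal.ofReal C) * (ENNReal.ofReal Z)⁻¹ := by
    have hD0 : 0 ≤ D := dist_nonneg.trans (hD x₀ x₀)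
    have hC0 : 0 ≤ C := (hh0 x₀).trans (hC x₀)
    rw [ENNReal.ofReal_div_of_pos hZpos, div_eq_mul_inv, ENNReal.ofReal_add (by positivity) hC0,
      ENNReal.ofReal_mul (by positivity), ENNReal.ofReal_mul zero_le_two, ENNReal.ofReal_ofNat]
  rw [hconst]
  exact W1_inv_smul_withDensity_le hhm.ennreal_ofReal
    (fun x => ENNReal.ofReal_le_ofReal (hC x)) hL.ofReal_sub_le
    (fun x y => by rw [edist_dist]; exact ENNReal.ofReal_le_ofReal (hD x y))
    (by rw [hlintegral, hZ]) (by rw [hlintegral, hZ'])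
    (ENNReal.ofReal_pos.mpr hZpos).ne' ENNReal.ofReal_ne_top
    (ENNReal.ofReal_pos.mpr hZ'pos).ne' ENNReal.ofReal_ne_top

/-- Global Lipschitz stability of the Bayesian posterior under the 1-Wasserstein
distance on a bounded Polish metric space:
`W₁(Fμ, Fμ') ≤ ((2DL + C)/Z(μ)) · W₁(μ, μ')`, where the posterior `Fμ` has density
`h/Z(μ)` with respect to the prior `μ`, the likelihood `h` is bounded by `C` and
`L`-Lipschitz, and `D` bounds the diameter of the space. -/
theorem stmt2 {X : Type*} [MetricSpace X] [PolishSpace X] [MeasurableSpace X] [BorelSpace X]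
    (μ μ' : Measure X) [IsProbabilityMeasure μ] [IsProbabilityMeasure μ']
    (h : X → ℝ) (C L D Z Z' : ℝ)
    (hhm : Measurable h) (hh0 : ∀ x, 0 ≤ h x)
    (hC : ∀ x, h x ≤ C) (hL0 : 0 ≤ L) (hL : LipschitzWith (Real.toNNReal L) h)
    (hD : ∀ x y : X, dist x y ≤ D)
    (hmom : ∀ x₀ : X, Integrable (fun x => dist x x₀) μ)
    (hmom' : ∀ x₀ : X, Integrable (fun x => dist x x₀) μ')
    (hZ : Z = ∫ x, h x ∂μ) (hZ' : Z' = ∫ x, h x ∂μ')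
    (hZpos : 0 < Z) (hZ'pos : 0 < Z') :
    W1 ((ENNReal.ofReal Z)⁻¹ • μ.withDensity (fun x => ENNReal.ofReal (h x)))
       ((ENNReal.ofReal Z')⁻¹ • μ'.withDensity (fun x => ENNReal.ofReal (h x)))
      ≤ ENNReal.ofReal ((2 * D * L + C) / Z) * W1 μ μ' :=
  stmt2_general μ μ' h C L D Z Z' hhm hh0 hC hL0 hL hD hZ hZ' hZpos hZ'pos
end

section
/- Let ν be a σ-finite measure on (Z, B(Z)), and let μ̃ = k·μ and μ̃′ = k′·μ′ with μ, μ′ probability measures absolutely continuous with respect to ν and k, k′ ∈ (0, ∞). Then the Hellinger distance between the normalized probability measures satisfies d_H(μ, μ′) ≤ (2/sqrt(k)) · d̃_H(μ̃, μ̃′), where d̃_H is the scaled Hellinger distance d̃_H(μ̃,μ̃′) = sqrt((1/2)∫(sqrt(dμ̃/dν) − sqrt(dμ̃′/dν))² dν). -/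
/-!
Write `ρ = ∫ √π √π' dν` for the Bhattacharyya coefficient. Expanding the squares, both distances
are explicit in `ρ`: `2 d_H(μ, μ')² = 2 - 2ρ` and `2 d̃_H(μ̃, μ̃')² = k + k' - 2 √(k k') ρ`, and
Cauchy–Schwarz gives `0 ≤ ρ ≤ 1`. The claim is then an elementary inequality in `√k`, `√k'`, `ρ`.
-/

open MeasureTheory

section Bhattacharyya

variable {Z : Type*} [MeasurableSpace Z] {ν : Measure Z} {π π' : Z → ℝ}

lemma MeasureTheory.Integrable.memLp_two_sqrt (hπ : Integrable π ν) (hπ0 : 0 ≤ᵐ[ν] π) :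
    MemLp (fun x => √(π x)) 2 ν := by
  refine (memLp_two_iff_integrable_sq hπ.aemeasurable.sqrt.aestronglyMeasurable).2 ?_
  refine hπ.congr ?_
  filter_upwards [hπ0] with x hx using (Real.sq_sqrt hx).symm

variable (ν π π') in
noncomputable def bhattacharyyaCoeff : ℝ := ∫ x, √(π x) * √(π' x) ∂ν

lemma bhattacharyyaCoeff_nonneg : 0 ≤ bhattacharyyaCoeff ν π π' :=
  integral_nonneg fun _ => mul_nonneg (Real.sqrt_nonneg _) (Real.sqrt_nonneg _)

lemma bhattacharyyaCoeff_le_sqrt_mul_sqrt (hπ : Integrable π ν) (hπ' : Integrable π' ν)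
    (hπ0 : 0 ≤ᵐ[ν] π) (hπ'0 : 0 ≤ᵐ[ν] π') :
    bhattacharyyaCoeff ν π π' ≤ √(∫ x, π x ∂ν) * √(∫ x, π' x ∂ν) := by
  have integral_sqrt_rpow_two {ρ : Z → ℝ} (hρ0 : 0 ≤ᵐ[ν] ρ) :
      ∫ x, √(ρ x) ^ (2 : ℝ) ∂ν = ∫ x, ρ x ∂ν :=
    integral_congr_ae <| by filter_upwards [hρ0] with x hx using by simp [Real.sq_sqrt hx]
  have h := integral_mul_le_Lp_mul_Lq_of_nonneg Real.HolderConjugate.two_two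
    (ae_of_all _ fun x => Real.sqrt_nonneg (π x)) (ae_of_all _ fun x => Real.sqrt_nonneg (π' x))
    (by simpa using hπ.memLp_two_sqrt hπ0) (by simpa using hπ'.memLp_two_sqrt hπ'0)
  rwa [integral_sqrt_rpow_two hπ0, integral_sqrt_rpow_two hπ'0, ← Real.sqrt_eq_rpow,
    ← Real.sqrt_eq_rpow] at h

lemma integral_sq_mul_sqrt_sub_mul_sqrt (a b : ℝ) (hπ : Integrable π ν) (hπ' : Integrable π' ν)
    (hπ0 : 0 ≤ᵐ[ν] π) (hπ'0 : 0 ≤ᵐ[ν] π') :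
    ∫ x, (a * √(π x) - b * √(π' x)) ^ 2 ∂ν =
      a ^ 2 * ∫ x, π x ∂ν + b ^ 2 * ∫ x, π' x ∂ν - 2 * a * b * bhattacharyyaCoeff ν π π' := by
  have hprod : Integrable (fun x => √(π x) * √(π' x)) ν :=
    (hπ.memLp_two_sqrt hπ0).integrable_mul (hπ'.memLp_two_sqrt hπ'0)
  have expand : (fun x => (a * √(π x) - b * √(π' x)) ^ 2) =ᵐ[ν]
      fun x => a ^ 2 * π x + b ^ 2 * π' x - 2 * a * b * (√(π x) * √(π' x)) := by
    filter_upwards [hπ0, hπ'0] with x hx hx'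
    linear_combination a ^ 2 * Real.sq_sqrt hx + b ^ 2 * Real.sq_sqrt hx'
  have hsum : Integrable (fun x => a ^ 2 * π x + b ^ 2 * π' x) ν :=
    (hπ.const_mul _).add (hπ'.const_mul _)
  rw [integral_congr_ae expand, integral_sub hsum (hprod.const_mul _),
    integral_add (hπ.const_mul _) (hπ'.const_mul _), integral_const_mul, integral_const_mul,
    integral_const_mul, bhattacharyyaCoeff]

end Bhattacharyya

lemma sqrt_one_sub_le_two_div_mul_sqrt {a ρ : ℝ} (b : ℝ) (ha : 0 < a) (hρ0 : 0 ≤ ρ)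
    (hρ1 : ρ ≤ 1) : √(1 - ρ) ≤ 2 / a * √((a ^ 2 + b ^ 2) / 2 - a * b * ρ) := by
  rw [← Real.sqrt_sq (by positivity : 0 ≤ 2 / a), ← Real.sqrt_mul (by positivity)]
  refine Real.sqrt_le_sqrt ?_
  rw [div_pow, div_mul_eq_mul_div, le_div_iff₀ (by positivity)]
  -- `2 (a² + b² - 2abρ) - a² (1 - ρ) = 2 (b - aρ)² + a² (1 - ρ) (1 + 2ρ)`
  nlinarith [sq_nonneg (b - a * ρ), mul_nonneg (mul_nonneg (sq_nonneg a) (sub_nonneg.2 hρ1))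
    (by linarith : (0 : ℝ) ≤ 1 + 2 * ρ)]

theorem stmt5_general {Z : Type*} [MeasurableSpace Z] (ν : Measure Z)
    (π π' : Z → ℝ) (k k' : ℝ)
    (hπ0 : ∀ x, 0 ≤ π x) (hπ'0 : ∀ x, 0 ≤ π' x)
    (hπ1 : ∫ x, π x ∂ν = 1) (hπ'1 : ∫ x, π' x ∂ν = 1)
    (hk : 0 < k) :
    Real.sqrt ((1 / 2) * ∫ x, (Real.sqrt (π x) - Real.sqrt (π' x)) ^ 2 ∂ν) ≤
      (2 / Real.sqrt k) *
        Real.sqrt ((1 / 2) * ∫ x, (Real.sqrt (k * π x) - Real.sqrt (k' * π' x)) ^ 2 ∂ν) := by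
  have hπ : Integrable π ν := Integrable.of_integral_ne_zero (by simp [hπ1])
  have hπ' : Integrable π' ν := Integrable.of_integral_ne_zero (by simp [hπ'1])
  have hdist := integral_sq_mul_sqrt_sub_mul_sqrt 1 1 hπ hπ' (ae_of_all _ hπ0) (ae_of_all _ hπ'0)
  have hscaled := integral_sq_mul_sqrt_sub_mul_sqrt (√k) (√k') hπ hπ'
    (ae_of_all _ hπ0) (ae_of_all _ hπ'0)
  have hρ1 : bhattacharyyaCoeff ν π π' ≤ 1 := by
    simpa [hπ1, hπ'1] using
      bhattacharyyaCoeff_le_sqrt_mul_sqrt hπ hπ' (ae_of_all _ hπ0) (ae_of_all _ hπ'0)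
  simp only [one_mul, one_pow, mul_one, hπ1, hπ'1] at hdist hscaled
  simp only [Real.sqrt_mul' _ (hπ0 _), Real.sqrt_mul' _ (hπ'0 _), hdist, hscaled]
  convert sqrt_one_sub_le_two_div_mul_sqrt (√k') (Real.sqrt_pos.2 hk)
    bhattacharyyaCoeff_nonneg hρ1 using 3 <;> ring

/-- For scaled probability measures `μ̃ = k·μ` and `μ̃' = k'·μ'` (densities `k·π`,
`k'·π'` w.r.t. a σ-finite `ν`), the Hellinger distance between the normalized
probability measures satisfies `d_H(μ, μ') ≤ (2/√k) · d̃_H(μ̃, μ̃')`. -/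
theorem stmt5 {Z : Type*} [MeasurableSpace Z] (ν : Measure Z) [SigmaFinite ν]
    (π π' : Z → ℝ) (k k' : ℝ)
    (hπm : Measurable π) (hπ'm : Measurable π')
    (hπ0 : ∀ x, 0 ≤ π x) (hπ'0 : ∀ x, 0 ≤ π' x)
    (hπ1 : ∫ x, π x ∂ν = 1) (hπ'1 : ∫ x, π' x ∂ν = 1)
    (hk : 0 < k) (hk' : 0 < k') :
    Real.sqrt ((1 / 2) * ∫ x, (Real.sqrt (π x) - Real.sqrt (π' x)) ^ 2 ∂ν) ≤
      (2 / Real.sqrt k) *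
        Real.sqrt ((1 / 2) * ∫ x, (Real.sqrt (k * π x) - Real.sqrt (k' * π' x)) ^ 2 ∂ν) :=
  stmt5_general ν π π' k k' hπ0 hπ'0 hπ1 hπ'1 hk
end

section
/- Let μ, μ′ be probability measures on (X, B(X)) absolutely continuous with respect to a σ-finite measure ν, and let h: X → [0,∞) be measurable with 0 < Z(μ) := ∫h dμ < ∞, 0 < Z(μ′) := ∫h dμ′ < ∞. Define the set X* := {x : dμ/dν(x) ≥ dμ′/dν(x)} if Z(μ) ≥ Z(μ′), and X* := {x : dμ/dν(x) ≤ dμ′/dν(x)} otherwise. Then the posteriors Fμ, Fμ′ (defined by Fμ(A) = ∫_A h dμ / Z(μ)) satisfy d_TV(Fμ, Fμ′) ≤ (1/max(Z(μ),Z(μ′))) · ∫_{X*} h(x)·|dμ/dν(x) − dμ′/dν(x)| ν(dx). -/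
open MeasureTheory
open scoped Classical

lemma stmt7_aux {X : Type*} [MeasurableSpace X] (ν : Measure X) [SigmaFinite ν]
    (π π' h : X → ℝ) (Z Z' : ℝ)
    (hπm : Measurable π) (hπ'm : Measurable π') (hhm : Measurable h)
    (hπ0 : ∀ x, 0 ≤ π x) (hπ'0 : ∀ x, 0 ≤ π' x) (hh0 : ∀ x, 0 ≤ h x)
    (hZ : Z = ∫ x, h x * π x ∂ν) (hZ' : Z' = ∫ x, h x * π' x ∂ν)
    (hZpos : 0 < Z) (hZ'pos : 0 < Z')
    (hint : Integrable (fun x => h x * π x) ν)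
    (hint' : Integrable (fun x => h x * π' x) ν)
    (hZZ' : Z' ≤ Z) :
    (1 / 2) * ∫ x, |h x * π x / Z - h x * π' x / Z'| ∂ν ≤
      (1 / Z) * ∫ x in {x | π' x ≤ π x}, h x * |π x - π' x| ∂ν := by
  set D : X → ℝ := fun x => h x * π x / Z - h x * π' x / Z' with hD
  have hDint : Integrable D ν := (hint.div_const Z).sub (hint'.div_const Z')
  have hDzero : ∫ x, D x ∂ν = 0 := by
    rw [integral_sub (hint.div_const Z) (hint'.div_const Z'),
      integral_div, integral_div, ← hZ, ← hZ',
      div_self hZpos.ne', div_self hZ'pos.ne', sub_self]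
  have hXs : MeasurableSet {x | π' x ≤ π x} := measurableSet_le hπ'm hπm
  set g : X → ℝ := fun x => h x * |π x - π' x| / Z with hg
  have hgint : Integrable g ν := by
    have : Integrable (fun x => (h x * π x + h x * π' x) / Z) ν :=
      (hint.add hint').div_const Z
    refine this.mono' ?_ ?_
    · exact ((hhm.mul ((hπm.sub hπ'm).abs)).div_const Z).aestronglyMeasurable
    · filter_upwards with x
      have h1 : |π x - π' x| ≤ π x + π' x := by
        rw [abs_sub_le_iff]
        constructor <;> nlinarith [hπ0 x, hπ'0 x]
      have : h x * |π x - π' x| ≤ h x * π x + h x * π' x := by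
        nlinarith [hh0 x, abs_nonneg (π x - π' x)]
      rw [Real.norm_eq_abs,
        abs_of_nonneg (div_nonneg (mul_nonneg (hh0 x) (abs_nonneg _)) hZpos.le)]
      exact div_le_div_of_nonneg_right this hZpos.le |>.trans_eq rfl
  have hindint : Integrable (Set.indicator {x | π' x ≤ π x} g) ν :=
    hgint.indicator hXs
  have hpt : ∀ x, max (D x) 0 ≤ Set.indicator {x | π' x ≤ π x} g x := by
    intro x
    by_cases hx : x ∈ {x | π' x ≤ π x}
    · rw [Set.indicator_of_mem hx]
      have hx' : π' x ≤ π x := hx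
      have hgnn : 0 ≤ g x := div_nonneg (mul_nonneg (hh0 x) (abs_nonneg _)) hZpos.le
      have hDle : D x ≤ g x := by
        have h2 : h x * π' x / Z ≤ h x * π' x / Z' := by
          apply div_le_div_of_nonneg_left (mul_nonneg (hh0 x) (hπ'0 x)) hZ'pos hZZ'
        have h3 : D x ≤ h x * π x / Z - h x * π' x / Z := by
          simp only [hD]; linarith
        have h4 : h x * π x / Z - h x * π' x / Z = g x := by
          simp only [hg, abs_of_nonneg (sub_nonneg.2 hx')]; ring
        exact le_of_le_of_eq h3 h4
      exact max_le hDle hgnn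
    · rw [Set.indicator_of_notMem hx]
      have hx' : π x ≤ π' x := le_of_not_ge hx
      have h1 : h x * π x / Z ≤ h x * π' x / Z := by
        apply div_le_div_of_nonneg_right _ hZpos.le
        exact mul_le_mul_of_nonneg_left hx' (hh0 x)
      have h2 : h x * π' x / Z ≤ h x * π' x / Z' :=
        div_le_div_of_nonneg_left (mul_nonneg (hh0 x) (hπ'0 x)) hZ'pos hZZ'
      have : D x ≤ 0 := by simp only [hD]; linarith
      simpa using max_le this le_rfl
  have habs : ∀ x, |D x| = 2 * max (D x) 0 - D x := by
    intro x
    rcases le_total (D x) 0 with hle | hle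
    · rw [abs_of_nonpos hle, max_eq_right hle]; ring
    · rw [abs_of_nonneg hle, max_eq_left hle]; ring
  have hkey : ∫ x, |D x| ∂ν = 2 * ∫ x, max (D x) 0 ∂ν := by
    calc ∫ x, |D x| ∂ν = ∫ x, (2 * max (D x) 0 - D x) ∂ν := by
          exact integral_congr_ae (Filter.Eventually.of_forall habs)
      _ = 2 * ∫ x, max (D x) 0 ∂ν - ∫ x, D x ∂ν := by
          rw [integral_sub ((hDint.pos_part).const_mul 2) hDint, integral_const_mul]
      _ = 2 * ∫ x, max (D x) 0 ∂ν := by rw [hDzero, sub_zero]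
  have hmono : ∫ x, max (D x) 0 ∂ν ≤ ∫ x, Set.indicator {x | π' x ≤ π x} g x ∂ν :=
    integral_mono hDint.pos_part hindint hpt
  have hset : ∫ x, Set.indicator {x | π' x ≤ π x} g x ∂ν
      = (1 / Z) * ∫ x in {x | π' x ≤ π x}, h x * |π x - π' x| ∂ν := by
    rw [integral_indicator hXs]
    simp only [hg, div_eq_mul_inv, integral_mul_const]
    ring
  calc (1 / 2) * ∫ x, |D x| ∂ν = ∫ x, max (D x) 0 ∂ν := by rw [hkey]; ring
    _ ≤ _ := hset ▸ hmono

/-- Intermediate TV bound for Bayesian updating: the total variation distance between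
the posteriors is bounded by `(1 / max Z Z')` times the integral of `h·|π − π'|` over
the set `X*` where the density of the prior with larger evidence dominates. -/
theorem stmt7 {X : Type*} [MeasurableSpace X] (ν : Measure X) [SigmaFinite ν]
    (π π' h : X → ℝ) (Z Z' : ℝ)
    (hπm : Measurable π) (hπ'm : Measurable π') (hhm : Measurable h)
    (hπ0 : ∀ x, 0 ≤ π x) (hπ'0 : ∀ x, 0 ≤ π' x) (hh0 : ∀ x, 0 ≤ h x)
    (hπ1 : ∫ x, π x ∂ν = 1) (hπ'1 : ∫ x, π' x ∂ν = 1)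
    (hZ : Z = ∫ x, h x * π x ∂ν) (hZ' : Z' = ∫ x, h x * π' x ∂ν)
    (hZpos : 0 < Z) (hZ'pos : 0 < Z')
    (hint : Integrable (fun x => h x * π x) ν)
    (hint' : Integrable (fun x => h x * π' x) ν)
    (Xstar : Set X)
    (hXstar : Xstar = if Z' ≤ Z then {x | π' x ≤ π x} else {x | π x ≤ π' x}) :
    (1 / 2) * ∫ x, |h x * π x / Z - h x * π' x / Z'| ∂ν ≤
      (1 / max Z Z') * ∫ x in Xstar, h x * |π x - π' x| ∂ν := by
  by_cases hc : Z' ≤ Z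
  · rw [hXstar, if_pos hc, max_eq_left hc]
    exact stmt7_aux ν π π' h Z Z' hπm hπ'm hhm hπ0 hπ'0 hh0 hZ hZ' hZpos hZ'pos hint hint' hc
  · have hc' : Z ≤ Z' := le_of_not_ge hc
    rw [hXstar, if_neg hc, max_eq_right hc']
    have := stmt7_aux ν π' π h Z' Z hπ'm hπm hhm hπ'0 hπ0 hh0 hZ' hZ hZ'pos hZpos hint' hint hc'
    have e1 : ∫ x, |h x * π' x / Z' - h x * π x / Z| ∂ν
        = ∫ x, |h x * π x / Z - h x * π' x / Z'| ∂ν := by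
      congr 1; funext x; rw [abs_sub_comm]
    have e2 : ∫ x in {x | π x ≤ π' x}, h x * |π' x - π x| ∂ν
        = ∫ x in {x | π x ≤ π' x}, h x * |π x - π' x| ∂ν := by
      congr 1; funext x; rw [abs_sub_comm]
    rw [e1, e2] at this
    exact this
end

section
/- Let μ, μ′ be probability measures on (X, B(X)) absolutely continuous with respect to a σ-finite measure ν, with densities π, π′, and let h: X → [0,∞) be measurable with finite positive evidences Z(μ), Z(μ′). Suppose that (i) ∫ h·sqrt(π·π′) dν ≥ (∫ h dν)·(∫ sqrt(π·π′) dν), and (ii) ∫ h dν ≥ sqrt(Z(μ)·Z(μ′)). Then the posteriors P = Fμ, Q = Fμ′ satisfy d_H(P, Q) ≤ d_H(μ, μ′). -/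
open MeasureTheory

/-- Error reduction by data assimilation under the Hellinger distance, first
sufficient condition: if (i) `∫ h·√(π·π') dν ≥ (∫ h dν)·(∫ √(π·π') dν)` and
(ii) `∫ h dν ≥ √(Z·Z')`, then `d_H(P, Q) ≤ d_H(μ, μ')` for the posteriors
`P, Q` with densities `h·π/Z`, `h·π'/Z'`. -/
theorem stmt10 {X : Type*} [MeasurableSpace X] (ν : Measure X) [SigmaFinite ν]
    (π π' h : X → ℝ) (Z Z' : ℝ)
    (hπm : Measurable π) (hπ'm : Measurable π') (hhm : Measurable h)
    (hπ0 : ∀ x, 0 ≤ π x) (hπ'0 : ∀ x, 0 ≤ π' x) (hh0 : ∀ x, 0 ≤ h x)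
    (hπ1 : ∫ x, π x ∂ν = 1) (hπ'1 : ∫ x, π' x ∂ν = 1)
    (hZ : Z = ∫ x, h x * π x ∂ν) (hZ' : Z' = ∫ x, h x * π' x ∂ν)
    (hZpos : 0 < Z) (hZ'pos : 0 < Z')
    (hint : Integrable (fun x => h x * π x) ν)
    (hint' : Integrable (fun x => h x * π' x) ν)
    (hhint : Integrable h ν)
    (hi : (∫ x, h x ∂ν) * ∫ x, Real.sqrt (π x * π' x) ∂ν ≤
      ∫ x, h x * Real.sqrt (π x * π' x) ∂ν)
    (hii : Real.sqrt (Z * Z') ≤ ∫ x, h x ∂ν) :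
    Real.sqrt ((1 / 2) * ∫ x,
        (Real.sqrt (h x * π x / Z) - Real.sqrt (h x * π' x / Z')) ^ 2 ∂ν) ≤
      Real.sqrt ((1 / 2) * ∫ x, (Real.sqrt (π x) - Real.sqrt (π' x)) ^ 2 ∂ν) := by
  have hsZ : 0 < Real.sqrt (Z * Z') := Real.sqrt_pos.mpr (mul_pos hZpos hZ'pos)
  have hπint : Integrable π ν := by
    by_contra hc; rw [integral_undef hc] at hπ1; norm_num at hπ1
  have hπ'int : Integrable π' ν := by
    by_contra hc; rw [integral_undef hc] at hπ'1; norm_num at hπ'1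
  have hsm : Measurable (fun x => Real.sqrt (π x * π' x)) := (hπm.mul hπ'm).sqrt
  have hsle : ∀ x, Real.sqrt (π x * π' x) ≤ (π x + π' x) / 2 := by
    intro x
    have h1 : Real.sqrt (π x * π' x) ≤ Real.sqrt (((π x + π' x) / 2) ^ 2) :=
      Real.sqrt_le_sqrt (by nlinarith [sq_nonneg (π x - π' x)])
    rwa [Real.sqrt_sq (by have := hπ0 x; have := hπ'0 x; linarith)] at h1
  have hgint : Integrable (fun x => (π x + π' x) / 2) ν := (hπint.add hπ'int).div_const 2
  have hg'int : Integrable (fun x => (h x * π x + h x * π' x) / 2) ν :=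
    (hint.add hint').div_const 2
  have hsint : Integrable (fun x => Real.sqrt (π x * π' x)) ν := by
    refine Integrable.mono hgint hsm.aestronglyMeasurable ?_
    filter_upwards with x
    rw [Real.norm_of_nonneg (Real.sqrt_nonneg _),
      Real.norm_of_nonneg (by have := hπ0 x; have := hπ'0 x; linarith)]
    exact hsle x
  have hhsint : Integrable (fun x => h x * Real.sqrt (π x * π' x)) ν := by
    refine Integrable.mono hg'int (hhm.mul hsm).aestronglyMeasurable ?_
    filter_upwards with x
    rw [Real.norm_of_nonneg (mul_nonneg (hh0 x) (Real.sqrt_nonneg _)),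
      Real.norm_of_nonneg (by
        have := mul_nonneg (hh0 x) (hπ0 x); have := mul_nonneg (hh0 x) (hπ'0 x); linarith)]
    calc h x * Real.sqrt (π x * π' x) ≤ h x * ((π x + π' x) / 2) :=
          mul_le_mul_of_nonneg_left (hsle x) (hh0 x)
      _ = (h x * π x + h x * π' x) / 2 := by ring
  -- pointwise expansion of posterior Hellinger integrand
  have key1 : ∀ x, (Real.sqrt (h x * π x / Z) - Real.sqrt (h x * π' x / Z')) ^ 2
      = h x * π x / Z + h x * π' x / Z'
        - 2 * (h x * Real.sqrt (π x * π' x) / Real.sqrt (Z * Z')) := by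
    intro x
    have e1 : Real.sqrt (h x * π x / Z) * Real.sqrt (h x * π' x / Z')
        = h x * Real.sqrt (π x * π' x) / Real.sqrt (Z * Z') := by
      rw [← Real.sqrt_mul (div_nonneg (mul_nonneg (hh0 x) (hπ0 x)) hZpos.le)]
      have e2 : h x * π x / Z * (h x * π' x / Z')
          = (h x) ^ 2 * (π x * π' x) / (Z * Z') := by ring
      rw [e2, Real.sqrt_div (mul_nonneg (sq_nonneg _) (mul_nonneg (hπ0 x) (hπ'0 x))),
        Real.sqrt_mul (sq_nonneg _), Real.sqrt_sq (hh0 x)]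
    have s1 := Real.sq_sqrt (div_nonneg (mul_nonneg (hh0 x) (hπ0 x)) hZpos.le)
    have s2 := Real.sq_sqrt (div_nonneg (mul_nonneg (hh0 x) (hπ'0 x)) hZ'pos.le)
    rw [sub_sq, s1, s2, mul_assoc, e1]; ring
  have key2 : ∀ x, (Real.sqrt (π x) - Real.sqrt (π' x)) ^ 2
      = π x + π' x - 2 * Real.sqrt (π x * π' x) := by
    intro x
    rw [sub_sq, Real.sq_sqrt (hπ0 x), Real.sq_sqrt (hπ'0 x), mul_assoc,
      ← Real.sqrt_mul (hπ0 x)]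
    ring
  have I1 : Integrable (fun x => h x * π x / Z + h x * π' x / Z') ν :=
    (hint.div_const Z).add (hint'.div_const Z')
  have I2 : Integrable
      (fun x => 2 * (h x * Real.sqrt (π x * π' x) / Real.sqrt (Z * Z'))) ν :=
    (hhsint.div_const _).const_mul 2
  have hL : ∫ x, (Real.sqrt (h x * π x / Z) - Real.sqrt (h x * π' x / Z')) ^ 2 ∂ν
      = 2 - 2 * ((∫ x, h x * Real.sqrt (π x * π' x) ∂ν) / Real.sqrt (Z * Z')) := by
    simp_rw [key1]
    rw [integral_sub I1 I2,
      integral_add (hint.div_const Z) (hint'.div_const Z'),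
      integral_const_mul, integral_div, integral_div, integral_div,
      ← hZ, ← hZ', div_self hZpos.ne', div_self hZ'pos.ne']
    ring
  have I3 : Integrable (fun x => π x + π' x) ν := hπint.add hπ'int
  have I4 : Integrable (fun x => 2 * Real.sqrt (π x * π' x)) ν := hsint.const_mul 2
  have hR : ∫ x, (Real.sqrt (π x) - Real.sqrt (π' x)) ^ 2 ∂ν
      = 2 - 2 * ∫ x, Real.sqrt (π x * π' x) ∂ν := by
    simp_rw [key2]
    rw [integral_sub I3 I4, integral_add hπint hπ'int, integral_const_mul, hπ1, hπ'1]
    ring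
  have hA0 : 0 ≤ ∫ x, Real.sqrt (π x * π' x) ∂ν :=
    integral_nonneg fun x => Real.sqrt_nonneg _
  have hkey : ∫ x, Real.sqrt (π x * π' x) ∂ν
      ≤ (∫ x, h x * Real.sqrt (π x * π' x) ∂ν) / Real.sqrt (Z * Z') := by
    rw [le_div_iff₀ hsZ]
    calc (∫ x, Real.sqrt (π x * π' x) ∂ν) * Real.sqrt (Z * Z')
        ≤ (∫ x, Real.sqrt (π x * π' x) ∂ν) * ∫ x, h x ∂ν :=
          mul_le_mul_of_nonneg_left hii hA0
      _ = (∫ x, h x ∂ν) * ∫ x, Real.sqrt (π x * π' x) ∂ν := by ring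
      _ ≤ ∫ x, h x * Real.sqrt (π x * π' x) ∂ν := hi
  apply Real.sqrt_le_sqrt
  rw [hL, hR]
  linarith
end

section
/- Let μ, μ′ be probability measures on (X, B(X)) absolutely continuous with respect to a σ-finite measure ν, with densities π, π′, and let h: X → [0,∞) be measurable with finite positive evidences Z(μ) = ∫h dμ and Z(μ′) = ∫h dμ′. Suppose that (i) ∫ h·(sqrt(π) − sqrt(π′))² dν ≤ (∫ h dν)·∫(sqrt(π) − sqrt(π′))² dν, and (ii) ∫ h dν ≤ sqrt(Z(μ)·Z(μ′)). Then the posteriors P = Fμ and Q = Fμ′ satisfy d_H(P, Q) ≤ d_H(μ, μ′). -/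
open MeasureTheory

/-- Error reduction by data assimilation under the Hellinger distance, second
sufficient condition: if (i) `∫ h·(√π − √π')² dν ≤ (∫ h dν)·∫ (√π − √π')² dν` and
(ii) `∫ h dν ≤ √(Z·Z')`, then `d_H(P, Q) ≤ d_H(μ, μ')` for the posteriors
`P, Q` with densities `h·π/Z`, `h·π'/Z'`. -/
theorem stmt11 {X : Type*} [MeasurableSpace X] (ν : Measure X) [SigmaFinite ν]
    (π π' h : X → ℝ) (Z Z' : ℝ)
    (hπm : Measurable π) (hπ'm : Measurable π') (hhm : Measurable h)
    (hπ0 : ∀ x, 0 ≤ π x) (hπ'0 : ∀ x, 0 ≤ π' x) (hh0 : ∀ x, 0 ≤ h x)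
    (hπ1 : ∫ x, π x ∂ν = 1) (hπ'1 : ∫ x, π' x ∂ν = 1)
    (hZ : Z = ∫ x, h x * π x ∂ν) (hZ' : Z' = ∫ x, h x * π' x ∂ν)
    (hZpos : 0 < Z) (hZ'pos : 0 < Z')
    (hint : Integrable (fun x => h x * π x) ν)
    (hint' : Integrable (fun x => h x * π' x) ν)
    (hhint : Integrable h ν)
    (hi : ∫ x, h x * (Real.sqrt (π x) - Real.sqrt (π' x)) ^ 2 ∂ν ≤
      (∫ x, h x ∂ν) * ∫ x, (Real.sqrt (π x) - Real.sqrt (π' x)) ^ 2 ∂ν)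
    (hii : (∫ x, h x ∂ν) ≤ Real.sqrt (Z * Z')) :
    Real.sqrt ((1 / 2) * ∫ x,
        (Real.sqrt (h x * π x / Z) - Real.sqrt (h x * π' x / Z')) ^ 2 ∂ν) ≤
      Real.sqrt ((1 / 2) * ∫ x, (Real.sqrt (π x) - Real.sqrt (π' x)) ^ 2 ∂ν) := by
  set a : X → ℝ := fun x => Real.sqrt (π x) with ha
  set b : X → ℝ := fun x => Real.sqrt (π' x) with hb
  have ha0 : ∀ x, 0 ≤ a x := fun x => Real.sqrt_nonneg _
  have hb0 : ∀ x, 0 ≤ b x := fun x => Real.sqrt_nonneg _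
  have ha2 : ∀ x, a x ^ 2 = π x := fun x => Real.sq_sqrt (hπ0 x)
  have hb2 : ∀ x, b x ^ 2 = π' x := fun x => Real.sq_sqrt (hπ'0 x)
  -- integrability of π, π'
  have Iπ : Integrable π ν := by
    by_contra hc
    rw [integral_undef hc] at hπ1; norm_num at hπ1
  have Iπ' : Integrable π' ν := by
    by_contra hc
    rw [integral_undef hc] at hπ'1; norm_num at hπ'1
  have Isum : Integrable (fun x => π x + π' x) ν := Iπ.add Iπ'
  have Ibound : Integrable (fun x => (π x + π' x) / 2) ν := Isum.div_const 2
  have Ihsum : Integrable (fun x => h x * π x + h x * π' x) ν := hint.add hint'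
  have Ihbound : Integrable (fun x => (h x * π x + h x * π' x) / 2) ν := Ihsum.div_const 2
  have hab : ∀ x, a x * b x ≤ (π x + π' x) / 2 := by
    intro x
    nlinarith [sq_nonneg (a x - b x), ha2 x, hb2 x]
  -- integrability of a*b
  have Iab : Integrable (fun x => a x * b x) ν := by
    refine Ibound.mono ((hπm.sqrt.mul hπ'm.sqrt).aestronglyMeasurable) ?_
    filter_upwards with x
    rw [Real.norm_eq_abs, Real.norm_eq_abs, abs_of_nonneg (mul_nonneg (ha0 x) (hb0 x)),
      abs_of_nonneg (div_nonneg (add_nonneg (hπ0 x) (hπ'0 x)) (by norm_num))]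
    exact hab x
  -- integrability of h*a*b
  have Ihab : Integrable (fun x => h x * (a x * b x)) ν := by
    refine Ihbound.mono ((hhm.mul (hπm.sqrt.mul hπ'm.sqrt)).aestronglyMeasurable) ?_
    filter_upwards with x
    rw [Real.norm_eq_abs, Real.norm_eq_abs,
      abs_of_nonneg (mul_nonneg (hh0 x) (mul_nonneg (ha0 x) (hb0 x))),
      abs_of_nonneg (div_nonneg (add_nonneg (mul_nonneg (hh0 x) (hπ0 x))
        (mul_nonneg (hh0 x) (hπ'0 x))) (by norm_num))]
    have := mul_le_mul_of_nonneg_left (hab x) (hh0 x)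
    linarith
  set A : ℝ := ∫ x, a x * b x ∂ν with hA
  set B : ℝ := ∫ x, h x * (a x * b x) ∂ν with hB
  set H : ℝ := ∫ x, h x ∂ν with hH
  set W : ℝ := Real.sqrt Z * Real.sqrt Z' with hW
  have hWpos : 0 < W := mul_pos (Real.sqrt_pos.mpr hZpos) (Real.sqrt_pos.mpr hZ'pos)
  have hA0 : 0 ≤ A := integral_nonneg (fun x => mul_nonneg (ha0 x) (hb0 x))
  have hA1 : A ≤ 1 := by
    have := integral_mono Iab Ibound hab
    rw [integral_div, integral_add Iπ Iπ', hπ1, hπ'1] at this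
    linarith
  -- prior squared Hellinger integrand
  have eprior : ∀ x, (a x - b x) ^ 2 = π x + π' x - 2 * (a x * b x) := by
    intro x
    rw [sub_sq, ha2 x, hb2 x]; ring
  have hI2 : ∫ x, (a x - b x) ^ 2 ∂ν = 2 - 2 * A := by
    rw [integral_congr_ae (Filter.Eventually.of_forall eprior),
      integral_sub Isum (Iab.const_mul 2), integral_add Iπ Iπ',
      integral_const_mul, hπ1, hπ'1]
    ring
  -- h times prior squared integrand
  have ehprior : ∀ x, h x * (a x - b x) ^ 2
      = h x * π x + h x * π' x - 2 * (h x * (a x * b x)) := by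
    intro x
    rw [sub_sq, ha2 x, hb2 x]; ring
  have hIh : ∫ x, h x * (a x - b x) ^ 2 ∂ν = Z + Z' - 2 * B := by
    rw [integral_congr_ae (Filter.Eventually.of_forall ehprior),
      integral_sub Ihsum (Ihab.const_mul 2), integral_add hint hint',
      integral_const_mul, hZ, hZ']
  -- posterior squared integrand
  have epost : ∀ x, (Real.sqrt (h x * π x / Z) - Real.sqrt (h x * π' x / Z')) ^ 2
      = h x * π x / Z + h x * π' x / Z' - (2 / W) * (h x * (a x * b x)) := by
    intro x
    have hcross : Real.sqrt (h x * π x / Z) * Real.sqrt (h x * π' x / Z')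
        = h x * (a x * b x) / W := by
      rw [← Real.sqrt_mul (div_nonneg (mul_nonneg (hh0 x) (hπ0 x)) hZpos.le)]
      rw [show h x * π x / Z * (h x * π' x / Z') = h x ^ 2 * (π x * π' x) / (Z * Z') by ring]
      rw [Real.sqrt_div (mul_nonneg (sq_nonneg _) (mul_nonneg (hπ0 x) (hπ'0 x))),
        Real.sqrt_mul (sq_nonneg _), Real.sqrt_sq (hh0 x), Real.sqrt_mul (hπ0 x),
        Real.sqrt_mul hZpos.le]
    have e1 : Real.sqrt (h x * π x / Z) ^ 2 = h x * π x / Z :=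
      Real.sq_sqrt (div_nonneg (mul_nonneg (hh0 x) (hπ0 x)) hZpos.le)
    have e2 : Real.sqrt (h x * π' x / Z') ^ 2 = h x * π' x / Z' :=
      Real.sq_sqrt (div_nonneg (mul_nonneg (hh0 x) (hπ'0 x)) hZ'pos.le)
    rw [sub_sq, e1, e2, mul_assoc, hcross]
    ring
  have Ip : Integrable (fun x => h x * π x / Z) ν := hint.div_const Z
  have Ip' : Integrable (fun x => h x * π' x / Z') ν := hint'.div_const Z'
  have Ipsum : Integrable (fun x => h x * π x / Z + h x * π' x / Z') ν := Ip.add Ip'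
  have hI1 : ∫ x, (Real.sqrt (h x * π x / Z) - Real.sqrt (h x * π' x / Z')) ^ 2 ∂ν
      = 2 - (2 / W) * B := by
    rw [integral_congr_ae (Filter.Eventually.of_forall epost),
      integral_sub Ipsum (Ihab.const_mul _), integral_add Ip Ip',
      integral_const_mul, integral_div, integral_div, ← hZ, ← hZ',
      div_self hZpos.ne', div_self hZ'pos.ne']
    ring
  -- the key inequality AW ≤ B
  have hHW : H ≤ W := by rwa [hW, ← Real.sqrt_mul hZpos.le]
  have hH0 : 0 ≤ H := integral_nonneg hh0
  have hZW : 2 * W ≤ Z + Z' := by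
    nlinarith [sq_nonneg (Real.sqrt Z - Real.sqrt Z'), Real.sq_sqrt hZpos.le,
      Real.sq_sqrt hZ'pos.le]
  have hi' : Z + Z' - 2 * B ≤ H * (2 - 2 * A) := by
    rw [← hIh, ← hI2]; exact hi
  have hkey : A * W ≤ B := by
    have h1 : H * (2 - 2 * A) ≤ W * (2 - 2 * A) :=
      mul_le_mul_of_nonneg_right hHW (by linarith)
    nlinarith
  -- conclude
  apply Real.sqrt_le_sqrt
  rw [hI1, hI2]
  have hAB : A ≤ B / W := (le_div_iff₀ hWpos).mpr hkey
  have h2 : (2 / W) * B = 2 * (B / W) := by ring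
  linarith
end

section
/- Let μ, μ′ be probability measures on (X, B(X)) absolutely continuous with respect to a σ-finite measure ν, with densities π, π′, and h: X → [0,∞) measurable with finite positive evidences Z(μ), Z(μ′). Then the posteriors P = Fμ and Q = Fμ′ satisfy d_H²(P, Q) ≤ (1/(2·sqrt(Z(μ)·Z(μ′)))) · ∫ h(x)·(sqrt(π(x)) − sqrt(π′(x)))² ν(dx). -/
open MeasureTheory

lemma stmt12_aux1 (a b u v : ℝ) (hu : u ≠ 0) (hv : v ≠ 0) :
    (a / u - b / v) ^ 2 = a ^ 2 / u ^ 2 + b ^ 2 / v ^ 2 - 2 / (u * v) * (a * b) := by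
  field_simp
  ring

/-- Bound on the squared Hellinger distance between Bayesian posteriors:
`d_H²(P, Q) ≤ (1/(2√(Z·Z'))) · ∫ h·(√π − √π')² dν` where `P, Q` have densities
`h·π/Z`, `h·π'/Z'` with respect to `ν`. -/
theorem stmt12 {X : Type*} [MeasurableSpace X] (ν : Measure X) [SigmaFinite ν]
    (π π' h : X → ℝ) (Z Z' : ℝ)
    (hπm : Measurable π) (hπ'm : Measurable π') (hhm : Measurable h)
    (hπ0 : ∀ x, 0 ≤ π x) (hπ'0 : ∀ x, 0 ≤ π' x) (hh0 : ∀ x, 0 ≤ h x)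
    (hπ1 : ∫ x, π x ∂ν = 1) (hπ'1 : ∫ x, π' x ∂ν = 1)
    (hZ : Z = ∫ x, h x * π x ∂ν) (hZ' : Z' = ∫ x, h x * π' x ∂ν)
    (hZpos : 0 < Z) (hZ'pos : 0 < Z')
    (hint : Integrable (fun x => h x * π x) ν)
    (hint' : Integrable (fun x => h x * π' x) ν) :
    (1 / 2) * ∫ x, (Real.sqrt (h x * π x / Z) - Real.sqrt (h x * π' x / Z')) ^ 2 ∂ν ≤
      (1 / (2 * Real.sqrt (Z * Z'))) *
        ∫ x, h x * (Real.sqrt (π x) - Real.sqrt (π' x)) ^ 2 ∂ν := by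
  have hsZ : (0:ℝ) < Real.sqrt Z := Real.sqrt_pos.2 hZpos
  have hsZ' : (0:ℝ) < Real.sqrt Z' := Real.sqrt_pos.2 hZ'pos
  have hss : Real.sqrt (Z * Z') = Real.sqrt Z * Real.sqrt Z' := Real.sqrt_mul hZpos.le Z'
  have hZs : Real.sqrt Z ^ 2 = Z := Real.sq_sqrt hZpos.le
  have hZ's : Real.sqrt Z' ^ 2 = Z' := Real.sq_sqrt hZ'pos.le
  set s : ℝ := Real.sqrt Z * Real.sqrt Z' with hsdef
  have hspos : 0 < s := mul_pos hsZ hsZ'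
  have hab_meas : Measurable (fun x => Real.sqrt (h x * π x) * Real.sqrt (h x * π' x)) :=
    (hhm.mul hπm).sqrt.mul (hhm.mul hπ'm).sqrt
  have ibound : Integrable (fun x => (h x * π x + h x * π' x) / 2) ν :=
    (hint.add hint').div_const 2
  have hab_int : Integrable (fun x => Real.sqrt (h x * π x) * Real.sqrt (h x * π' x)) ν := by
    refine Integrable.mono' ibound hab_meas.aestronglyMeasurable
      (Filter.Eventually.of_forall fun x => ?_)
    have h1 : 0 ≤ Real.sqrt (h x * π x) * Real.sqrt (h x * π' x) :=
      mul_nonneg (Real.sqrt_nonneg _) (Real.sqrt_nonneg _)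
    rw [Real.norm_eq_abs, abs_of_nonneg h1]
    have e1 : Real.sqrt (h x * π x) ^ 2 = h x * π x :=
      Real.sq_sqrt (mul_nonneg (hh0 x) (hπ0 x))
    have e2 : Real.sqrt (h x * π' x) ^ 2 = h x * π' x :=
      Real.sq_sqrt (mul_nonneg (hh0 x) (hπ'0 x))
    nlinarith [sq_nonneg (Real.sqrt (h x * π x) - Real.sqrt (h x * π' x))]
  set I : ℝ := ∫ x, Real.sqrt (h x * π x) * Real.sqrt (h x * π' x) ∂ν with hIdef
  -- pointwise identity for the left integrand
  have key1 : ∀ x, (Real.sqrt (h x * π x / Z) - Real.sqrt (h x * π' x / Z')) ^ 2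
      = h x * π x / Z + h x * π' x / Z'
        - 2 / s * (Real.sqrt (h x * π x) * Real.sqrt (h x * π' x)) := by
    intro x
    have e1 : Real.sqrt (h x * π x / Z) = Real.sqrt (h x * π x) / Real.sqrt Z :=
      Real.sqrt_div (mul_nonneg (hh0 x) (hπ0 x)) Z
    have e2 : Real.sqrt (h x * π' x / Z') = Real.sqrt (h x * π' x) / Real.sqrt Z' :=
      Real.sqrt_div (mul_nonneg (hh0 x) (hπ'0 x)) Z'
    have f1 : Real.sqrt (h x * π x) ^ 2 = h x * π x :=
      Real.sq_sqrt (mul_nonneg (hh0 x) (hπ0 x))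
    have f2 : Real.sqrt (h x * π' x) ^ 2 = h x * π' x :=
      Real.sq_sqrt (mul_nonneg (hh0 x) (hπ'0 x))
    rw [e1, e2, stmt12_aux1 _ _ _ _ hsZ.ne' hsZ'.ne', f1, f2, hZs, hZ's, hsdef]
  -- pointwise identity for the right integrand
  have key2 : ∀ x, h x * (Real.sqrt (π x) - Real.sqrt (π' x)) ^ 2
      = h x * π x + h x * π' x
        - 2 * (Real.sqrt (h x * π x) * Real.sqrt (h x * π' x)) := by
    intro x
    have e1 : Real.sqrt (h x * π x) = Real.sqrt (h x) * Real.sqrt (π x) :=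
      Real.sqrt_mul (hh0 x) _
    have e2 : Real.sqrt (h x * π' x) = Real.sqrt (h x) * Real.sqrt (π' x) :=
      Real.sqrt_mul (hh0 x) _
    have f0 : Real.sqrt (h x) ^ 2 = h x := Real.sq_sqrt (hh0 x)
    have f1 : Real.sqrt (π x) ^ 2 = π x := Real.sq_sqrt (hπ0 x)
    have f2 : Real.sqrt (π' x) ^ 2 = π' x := Real.sq_sqrt (hπ'0 x)
    have hab : Real.sqrt (h x * π x) * Real.sqrt (h x * π' x)
        = h x * (Real.sqrt (π x) * Real.sqrt (π' x)) := by
      rw [e1, e2]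
      linear_combination (Real.sqrt (π x) * Real.sqrt (π' x)) * f0
    rw [hab, sub_sq]
    linear_combination (h x) * f1 + (h x) * f2
  -- compute the left integral
  have i1 : Integrable (fun x => h x * π x / Z + h x * π' x / Z') ν :=
    (hint.div_const Z).add (hint'.div_const Z')
  have i2 : Integrable
      (fun x => 2 / s * (Real.sqrt (h x * π x) * Real.sqrt (h x * π' x))) ν :=
    hab_int.const_mul _
  have i3 : Integrable (fun x => h x * π x + h x * π' x) ν := hint.add hint'
  have i4 : Integrable
      (fun x => 2 * (Real.sqrt (h x * π x) * Real.sqrt (h x * π' x))) ν :=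
    hab_int.const_mul _
  have hL : ∫ x, (Real.sqrt (h x * π x / Z) - Real.sqrt (h x * π' x / Z')) ^ 2 ∂ν
      = 2 - 2 / s * I := by
    rw [integral_congr_ae (Filter.Eventually.of_forall key1), integral_sub i1 i2,
      integral_add (hint.div_const Z) (hint'.div_const Z'), integral_div, integral_div,
      integral_const_mul, ← hZ, ← hZ', div_self hZpos.ne', div_self hZ'pos.ne', ← hIdef]
    ring
  have hR : ∫ x, h x * (Real.sqrt (π x) - Real.sqrt (π' x)) ^ 2 ∂ν
      = Z + Z' - 2 * I := by
    rw [integral_congr_ae (Filter.Eventually.of_forall key2), integral_sub i3 i4,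
      integral_add hint hint', integral_const_mul, ← hZ, ← hZ', ← hIdef]
  rw [hL, hR, hss]
  have hAM : 2 * s ≤ Z + Z' := by
    nlinarith [sq_nonneg (Real.sqrt Z - Real.sqrt Z')]
  have hL' : (1/2 : ℝ) * (2 - 2 / s * I) = (2 * s - 2 * I) / (2 * s) := by
    field_simp
  have hR' : (1 / (2 * s)) * (Z + Z' - 2 * I) = (Z + Z' - 2 * I) / (2 * s) := by
    ring
  rw [hL', hR', div_le_div_iff_of_pos_right (by positivity)]
  linarith
end

section
/- Let μ, μ′ be probability measures on (X, B(X)) absolutely continuous with respect to a σ-finite measure ν, and h: X → [0,∞) measurable with finite positive evidences Z(μ) = ∫h dμ, Z(μ′) = ∫h dμ′. Define X* := {x : dμ/dν(x) ≥ dμ′/dν(x)} if Z(μ) ≥ Z(μ′) and X* := {x : dμ/dν(x) ≤ dμ′/dν(x)} otherwise. Suppose (i) ∫_{X*} h·|dμ/dν − dμ′/dν| dν ≤ (∫_{X*} h dν)·∫_{X*} |dμ/dν − dμ′/dν| dν, and (ii) ∫_{X*} h dν ≤ max(Z(μ), Z(μ′)). Then the posteriors P = Fμ, Q = Fμ′ satisfy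 d_TV(P, Q) ≤ d_TV(μ, μ′). -/
/-!
Assume `Z' ≤ Z` and let `A = {π' ≤ π}`. From `hπ/Z - hπ'/Z' = h(π - π')/Z + hπ'(1/Z - 1/Z')`
the posterior distance is at most `∫ h|π - π'| / Z + 1 - Z'/Z`. As `h(π - π')` is `≥ 0` on `A`,
`≤ 0` off `A` and integrates to `Z - Z'`, we get `∫ h|π - π'| = 2J - (Z - Z')` with
`J = ∫_A h|π - π'|`, so the bound is `2J/Z`. Conditions (i) and (ii) give `J ≤ Z ∫_A |π - π'|`,
and `∫ |π - π'| = 2 ∫_A |π - π'|` because `π - π'` integrates to `0`.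
-/

open MeasureTheory

section

variable {X : Type*} [MeasurableSpace X] {ν : Measure X}

theorem integral_abs_eq_two_mul_setIntegral_abs_sub_integral {f : X → ℝ} {s : Set X}
    (hs : MeasurableSet s) (hf : Integrable f ν)
    (hf_nonneg : ∀ x ∈ s, 0 ≤ f x) (hf_nonpos : ∀ x ∉ s, f x ≤ 0) :
    ∫ x, |f x| ∂ν = 2 * ∫ x in s, |f x| ∂ν - ∫ x, f x ∂ν := by
  have h_on : ∫ x in s, f x ∂ν = ∫ x in s, |f x| ∂ν :=
    setIntegral_congr_fun hs fun x hx => (abs_of_nonneg (hf_nonneg x hx)).symm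
  have h_off : ∫ x in sᶜ, f x ∂ν = -∫ x in sᶜ, |f x| ∂ν := by
    rw [← integral_neg]
    exact setIntegral_congr_fun hs.compl fun x hx => by
      simp only [abs_of_nonpos (hf_nonpos x hx), neg_neg]
  have h_abs := integral_add_compl hs hf.abs
  have h_int := integral_add_compl hs hf
  linarith

theorem abs_div_sub_div_le {u v Z Z' : ℝ} (hv : 0 ≤ v) (hZ' : 0 < Z') (hZZ' : Z' ≤ Z) :
    |u / Z - v / Z'| ≤ |u - v| / Z + v * (1 / Z' - 1 / Z) := by
  have hZ : 0 < Z := hZ'.trans_le hZZ'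
  have h_inv : 1 / Z ≤ 1 / Z' := one_div_le_one_div_of_le hZ' hZZ'
  calc |u / Z - v / Z'| = |(u - v) / Z + v * (1 / Z - 1 / Z')| := by
        congr 1; field_simp; ring
    _ ≤ |(u - v) / Z| + |v * (1 / Z - 1 / Z')| := abs_add_le _ _
    _ = |u - v| / Z + v * (1 / Z' - 1 / Z) := by
        rw [abs_div, abs_of_pos hZ, abs_mul, abs_of_nonneg hv,
          abs_of_nonpos (sub_nonpos.2 h_inv), neg_sub]

theorem integral_abs_div_integral_sub_div_integral_le {f g : X → ℝ} {s : Set X}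
    (hs : MeasurableSet s) (hf : Integrable f ν) (hg : Integrable g ν) (hg0 : ∀ x, 0 ≤ g x)
    (hgf : ∀ x ∈ s, g x ≤ f x) (hfg : ∀ x ∉ s, f x ≤ g x)
    (hg_pos : 0 < ∫ x, g x ∂ν) (hgf_int : ∫ x, g x ∂ν ≤ ∫ x, f x ∂ν) :
    ∫ x, |f x / ∫ y, f y ∂ν - g x / ∫ y, g y ∂ν| ∂ν
      ≤ 2 * (∫ x in s, |f x - g x| ∂ν) / ∫ x, f x ∂ν := by
  set Z := ∫ y, f y ∂ν
  set Z' := ∫ y, g y ∂ν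
  have hZ : 0 < Z := hg_pos.trans_le hgf_int
  have h_split := integral_abs_eq_two_mul_setIntegral_abs_sub_integral (f := fun x => f x - g x)
    hs (hf.sub hg) (fun x hx => sub_nonneg.2 (hgf x hx)) (fun x hx => sub_nonpos.2 (hfg x hx))
  rw [integral_sub hf hg] at h_split
  have h_abs : Integrable (fun x => |f x - g x|) ν := (hf.sub hg).abs
  have h_bound : Integrable (fun x => |f x - g x| / Z + g x * (1 / Z' - 1 / Z)) ν :=
    (h_abs.div_const Z).add (hg.mul_const _)
  calc ∫ x, |f x / Z - g x / Z'| ∂ν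
      ≤ ∫ x, (|f x - g x| / Z + g x * (1 / Z' - 1 / Z)) ∂ν :=
        integral_mono_of_nonneg (.of_forall fun x => abs_nonneg _) h_bound
          (.of_forall fun x => abs_div_sub_div_le (hg0 x) hg_pos hgf_int)
    _ = (∫ x, |f x - g x| ∂ν) / Z + Z' * (1 / Z' - 1 / Z) := by
        rw [integral_add (h_abs.div_const Z) (hg.mul_const _), integral_div,
          integral_mul_const]
    _ = 2 * (∫ x in s, |f x - g x| ∂ν) / Z := by
        rw [h_split]; field_simp; ring

theorem integral_abs_posterior_sub_le_of_le (π π' h : X → ℝ)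
    (hπm : Measurable π) (hπ'm : Measurable π') (hπ'0 : ∀ x, 0 ≤ π' x) (hh0 : ∀ x, 0 ≤ h x)
    (hπ1 : ∫ x, π x ∂ν = 1) (hπ'1 : ∫ x, π' x ∂ν = 1)
    (hint : Integrable (fun x => h x * π x) ν) (hint' : Integrable (fun x => h x * π' x) ν)
    (hZ'pos : 0 < ∫ x, h x * π' x ∂ν) (hZZ' : ∫ x, h x * π' x ∂ν ≤ ∫ x, h x * π x ∂ν)
    (hi : ∫ x in {x | π' x ≤ π x}, h x * |π x - π' x| ∂ν ≤
      (∫ x in {x | π' x ≤ π x}, h x ∂ν) * ∫ x in {x | π' x ≤ π x}, |π x - π' x| ∂ν)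
    (hii : ∫ x in {x | π' x ≤ π x}, h x ∂ν ≤ ∫ x, h x * π x ∂ν) :
    ∫ x, |h x * π x / (∫ y, h y * π y ∂ν) - h x * π' x / (∫ y, h y * π' y ∂ν)| ∂ν
      ≤ ∫ x, |π x - π' x| ∂ν := by
  set A := {x | π' x ≤ π x}
  set Z := ∫ y, h y * π y ∂ν
  have hA : MeasurableSet A := measurableSet_le hπ'm hπm
  have hZ : 0 < Z := hZ'pos.trans_le hZZ'
  have hI0 : 0 ≤ ∫ x in A, |π x - π' x| ∂ν := setIntegral_nonneg hA fun x _ => abs_nonneg _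
  have h_prior : ∫ x, |π x - π' x| ∂ν = 2 * ∫ x in A, |π x - π' x| ∂ν := by
    have hπi : Integrable π ν := .of_integral_ne_zero (by simp [hπ1])
    have hπ'i : Integrable π' ν := .of_integral_ne_zero (by simp [hπ'1])
    rw [integral_abs_eq_two_mul_setIntegral_abs_sub_integral (f := fun x => π x - π' x) hA
      (hπi.sub hπ'i)
      (fun x hx => sub_nonneg.2 hx) (fun x hx => sub_nonpos.2 (not_le.1 hx).le),
      integral_sub hπi hπ'i, hπ1, hπ'1, sub_self, sub_zero]
  have h_post := integral_abs_div_integral_sub_div_integral_le hA hint hint'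
    (fun x => mul_nonneg (hh0 x) (hπ'0 x))
    (fun x hx => mul_le_mul_of_nonneg_left hx (hh0 x))
    (fun x hx => mul_le_mul_of_nonneg_left (not_le.1 hx).le (hh0 x)) hZ'pos hZZ'
  have hJ : ∫ x in A, |h x * π x - h x * π' x| ∂ν ≤ Z * ∫ x in A, |π x - π' x| ∂ν := by
    calc ∫ x in A, |h x * π x - h x * π' x| ∂ν = ∫ x in A, h x * |π x - π' x| ∂ν := by
          simp only [← mul_sub, abs_mul, abs_of_nonneg (hh0 _)]
      _ ≤ _ := hi
      _ ≤ Z * ∫ x in A, |π x - π' x| ∂ν := mul_le_mul_of_nonneg_right hii hI0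
  calc _ ≤ 2 * (∫ x in A, |h x * π x - h x * π' x| ∂ν) / Z := h_post
    _ ≤ 2 * (Z * ∫ x in A, |π x - π' x| ∂ν) / Z := by gcongr
    _ = ∫ x, |π x - π' x| ∂ν := by rw [h_prior]; field_simp

end

theorem stmt18_general {X : Type*} [MeasurableSpace X] (ν : Measure X)
    (π π' h : X → ℝ) (Z Z' : ℝ)
    (hπm : Measurable π) (hπ'm : Measurable π')
    (hπ0 : ∀ x, 0 ≤ π x) (hπ'0 : ∀ x, 0 ≤ π' x) (hh0 : ∀ x, 0 ≤ h x)
    (hπ1 : ∫ x, π x ∂ν = 1) (hπ'1 : ∫ x, π' x ∂ν = 1)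
    (hZ : Z = ∫ x, h x * π x ∂ν) (hZ' : Z' = ∫ x, h x * π' x ∂ν)
    (hZpos : 0 < Z) (hZ'pos : 0 < Z')
    (hint : Integrable (fun x => h x * π x) ν)
    (hint' : Integrable (fun x => h x * π' x) ν)
    (Xstar : Set X)
    (hXstar : Xstar = if Z' ≤ Z then {x | π' x ≤ π x} else {x | π x ≤ π' x})
    (hi : ∫ x in Xstar, h x * |π x - π' x| ∂ν ≤
      (∫ x in Xstar, h x ∂ν) * ∫ x in Xstar, |π x - π' x| ∂ν)
    (hii : ∫ x in Xstar, h x ∂ν ≤ max Z Z') :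
    (1 / 2) * ∫ x, |h x * π x / Z - h x * π' x / Z'| ∂ν ≤
      (1 / 2) * ∫ x, |π x - π' x| ∂ν := by
  refine mul_le_mul_of_nonneg_left ?_ (by norm_num)
  subst hZ hZ' hXstar
  by_cases hc : ∫ x, h x * π' x ∂ν ≤ ∫ x, h x * π x ∂ν
  · rw [if_pos hc] at hi hii
    rw [max_eq_left hc] at hii
    exact integral_abs_posterior_sub_le_of_le π π' h hπm hπ'm hπ'0 hh0 hπ1 hπ'1 hint hint'
      hZ'pos hc hi hii
  · have hc' := (not_le.1 hc).le
    rw [if_neg hc] at hi hii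
    rw [max_eq_right hc'] at hii
    simp only [abs_sub_comm (π _)] at hi ⊢
    simpa only [abs_sub_comm] using integral_abs_posterior_sub_le_of_le π' π h hπ'm hπm hπ0
      hh0 hπ'1 hπ1 hint' hint hZpos hc' hi hii

/-- Error reduction by data assimilation under the total variation distance:
with the set `X*` where the density of the prior of larger evidence dominates, if
(i) `∫_{X*} h·|π − π'| dν ≤ (∫_{X*} h dν)·∫_{X*} |π − π'| dν` and
(ii) `∫_{X*} h dν ≤ max Z Z'`, then the posteriors `P, Q` with densities
`h·π/Z`, `h·π'/Z'` satisfy `d_TV(P, Q) ≤ d_TV(μ, μ')`. -/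
theorem stmt18 {X : Type*} [MeasurableSpace X] (ν : Measure X) [SigmaFinite ν]
    (π π' h : X → ℝ) (Z Z' : ℝ)
    (hπm : Measurable π) (hπ'm : Measurable π') (hhm : Measurable h)
    (hπ0 : ∀ x, 0 ≤ π x) (hπ'0 : ∀ x, 0 ≤ π' x) (hh0 : ∀ x, 0 ≤ h x)
    (hπ1 : ∫ x, π x ∂ν = 1) (hπ'1 : ∫ x, π' x ∂ν = 1)
    (hZ : Z = ∫ x, h x * π x ∂ν) (hZ' : Z' = ∫ x, h x * π' x ∂ν)
    (hZpos : 0 < Z) (hZ'pos : 0 < Z')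
    (hint : Integrable (fun x => h x * π x) ν)
    (hint' : Integrable (fun x => h x * π' x) ν)
    (Xstar : Set X)
    (hXstar : Xstar = if Z' ≤ Z then {x | π' x ≤ π x} else {x | π x ≤ π' x})
    (hi : ∫ x in Xstar, h x * |π x - π' x| ∂ν ≤
      (∫ x in Xstar, h x ∂ν) * ∫ x in Xstar, |π x - π' x| ∂ν)
    (hii : ∫ x in Xstar, h x ∂ν ≤ max Z Z') :
    (1 / 2) * ∫ x, |h x * π x / Z - h x * π' x / Z'| ∂ν ≤
      (1 / 2) * ∫ x, |π x - π' x| ∂ν :=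
  stmt18_general ν π π' h Z Z' hπm hπ'm hπ0 hπ'0 hh0 hπ1 hπ'1 hZ hZ' hZpos hZ'pos hint hint' Xstar
    hXstar hi hii
end
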